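/- arXiv:2504.21496 — 9 statements merged into one kernel-verified Lean document; each statement's English description precedes it below -/
import Mathlib

section
/- If (X₁,d₁) isometrically embeds into (X₂,d₂), then there is an injective group homomorphism from Bd(X₁,d₁) into Bd(X₂,d₂). -/
def Bd (X : Type*) [MetricSpace X] : Subgroup (Equiv.Perm X) where
  carrier := {g : Equiv.Perm X | ∃ r : ℕ, ∀ x : X, dist x (g x) ≤ r}
  one_mem' := ⟨0, fun x => by simp⟩
  mul_mem' := by
    rintro a b ⟨r, hr⟩ ⟨s, hs⟩
    refine ⟨s + r, fun x => ?_⟩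
    calc dist x ((a * b) x) ≤ dist x (b x) + dist (b x) (a (b x)) := dist_triangle _ _ _
    _ ≤ (s : ℝ) + r := add_le_add (hs x) (hr (b x))
    _ = ((s + r : ℕ) : ℝ) := by push_cast; ring
  inv_mem' := by
    rintro a ⟨r, hr⟩
    exact ⟨r, fun x => by simpa [dist_comm] using hr (a⁻¹ x)⟩

/-- An isometric embedding of metric spaces induces an injective
group homomorphism `Bd X₁ → Bd X₂`. -/
theorem bd_mono_of_isometric_embedding (X₁ X₂ : Type*) [MetricSpace X₁] [MetricSpace X₂]
    (f : X₁ → X₂) (hf : ∀ x y : X₁, dist (f x) (f y) = dist x y) :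
    ∃ φ : Bd X₁ →* Bd X₂, Function.Injective φ := by
  classical
  have hinj : Function.Injective f := fun a b h => by
    have : dist a b = 0 := by rw [← hf]; simp [h]
    exact dist_eq_zero.mp this
  let e : X₁ ≃ {x : X₂ // x ∈ Set.range f} := Equiv.ofInjective f hinj
  let F : Bd X₁ →* Equiv.Perm X₂ :=
    (Equiv.Perm.extendDomainHom e).comp (Bd X₁).subtype
  have hmem : ∀ g : Bd X₁, F g ∈ Bd X₂ := by
    rintro ⟨g, r, hr⟩
    refine ⟨r, fun x => ?_⟩
    by_cases hx : x ∈ Set.range f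
    · obtain ⟨y, rfl⟩ := hx
      have : F ⟨g, r, hr⟩ (f y) = f (g y) := by
        simpa [F, e] using Equiv.Perm.extendDomain_apply_image g e y
      rw [this, hf]
      exact hr y
    · have : F ⟨g, r, hr⟩ x = x := Equiv.Perm.extendDomain_apply_not_subtype g e hx
      simp [this]
  refine ⟨F.codRestrict (Bd X₂) hmem, fun a b hab => ?_⟩
  have : F a = F b := congrArg Subtype.val hab
  have := Equiv.Perm.extendDomainHom_injective e this
  exact Subtype.ext this
end

section
/- If a metric space X contains an infinite subset of finite diameter, then Bd(X) contains a subgroup isomorphic to Sym(ℤ), the full symmetric group on a countably infinite set. -/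
/-- If a metric space contains an infinite subset of finite
diameter, then `Bd X` contains a subgroup isomorphic to `Sym(ℤ)`. -/
theorem symZ_embeds_in_bd (X : Type*) [MetricSpace X] (Y : Set X)
    (hYinf : Y.Infinite) (hYbdd : ∃ C : ℝ, ∀ y ∈ Y, ∀ y' ∈ Y, dist y y' ≤ C) :
    ∃ φ : Equiv.Perm ℤ →* Bd X, Function.Injective φ := by
  obtain ⟨C, hC⟩ := hYbdd
  -- embedding of ℤ into Y
  let f0 : ℕ ↪ Y := hYinf.natEmbedding
  let f : ℤ ↪ X :=
    ((Denumerable.eqv ℤ).toEmbedding.trans f0).trans (Function.Embedding.subtype _)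
  have hfY : ∀ n : ℤ, f n ∈ Y := fun n => (f0 ((Denumerable.eqv ℤ) n)).2
  have hmem : ∀ e : Equiv.Perm ℤ, Equiv.Perm.viaEmbeddingHom f e ∈ Bd X := by
    intro e
    refine ⟨⌈C⌉₊, fun x => ?_⟩
    by_cases hx : x ∈ Set.range f
    · obtain ⟨n, rfl⟩ := hx
      rw [Equiv.Perm.viaEmbeddingHom_apply, Equiv.Perm.viaEmbedding_apply]
      exact (hC _ (hfY n) _ (hfY (e n))).trans (Nat.le_ceil C)
    · rw [Equiv.Perm.viaEmbeddingHom_apply, Equiv.Perm.viaEmbedding_apply_of_notMem _ _ _ hx]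
      simp
  refine ⟨(Equiv.Perm.viaEmbeddingHom f).codRestrict (Bd X) hmem, ?_⟩
  intro a b hab
  apply Equiv.Perm.viaEmbeddingHom_injective f
  exact congrArg Subtype.val hab
end

section
/- The group Bd(ℤ⁺) contains a subgroup isomorphic to ℚ/ℤ. -/
-- `AddCircle (1 : ℚ)` is by definition `ℚ ⧸ AddSubgroup.zmultiples 1`.
local notation "ℚ/ℤ" => AddCircle (1 : ℚ)

section Translation

variable {X G : Type*} [AddGroup G]

def translationHom (e : X ≃ G) : Multiplicative G →* Equiv.Perm X :=
  (Equiv.permCongrHom e.symm).toMonoidHom.comp (MulAction.toPermHom (Multiplicative G) G)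

lemma translationHom_apply (e : X ≃ G) (g : Multiplicative G) (x : X) :
    translationHom e g x = e.symm (g.toAdd + e x) :=
  rfl

lemma translationHom_injective (e : X ≃ G) : Function.Injective (translationHom e) := by
  intro g h hgh
  have := congrArg e (DFunLike.congr_fun hgh (e.symm 0))
  simpa [translationHom_apply] using this

end Translation

lemma dist_le_of_div_eq {n m c : ℕ} (hc : 0 < c) (h : n / c = m / c) : dist n m ≤ c := by
  have hn := Nat.div_add_mod n c
  have hm := Nat.div_add_mod m c
  have hn_lt := Nat.mod_lt n hc
  have hm_lt := Nat.mod_lt m hc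
  rw [h] at hn
  generalize c * (m / c) = t at hn hm
  have h1 : n ≤ c + m := by omega
  have h2 : m ≤ c + n := by omega
  rw [Nat.dist_eq, abs_sub_le_iff, sub_le_iff_le_add, sub_le_iff_le_add]
  exact ⟨by exact_mod_cast h1, by exact_mod_cast h2⟩

lemma mem_Bd_of_div_eq {σ : Equiv.Perm ℕ} {c : ℕ} (hc : 0 < c) (h : ∀ n, σ n / c = n / c) :
    σ ∈ Bd ℕ :=
  ⟨c, fun n => dist_le_of_div_eq hc (h n).symm⟩

section

open Nat

lemma Rat.exists_eq_intCast_div_factorial (x : ℚ) : ∃ (k : ℕ) (B : ℤ), x = B / k ! := by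
  obtain ⟨c, hc⟩ := Nat.dvd_factorial x.pos le_rfl
  have hc0 : (c : ℚ) ≠ 0 := by
    have := factorial_ne_zero x.den
    rw [hc] at this
    exact_mod_cast right_ne_zero_of_mul this
  refine ⟨x.den, x.num * c, ?_⟩
  rw [hc]
  push_cast
  rw [mul_div_mul_right _ _ hc0, Rat.num_div_den]

namespace FactorialBase

-- the coefficient of `i!` in the factorial-base expansion of `n`
def digit (i n : ℕ) : ℕ := n / i ! % (i + 1)

lemma digit_lt (i n : ℕ) : digit i n < i + 1 := Nat.mod_lt _ i.succ_pos

lemma digit_eq_zero_of_lt {i n : ℕ} (h : n < i !) : digit i n = 0 := by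
  simp [digit, Nat.div_eq_of_lt h]

lemma digit_eq_mod_div (i n : ℕ) : digit i n = n % (i + 1)! / i ! := by
  rw [digit, factorial_succ, mul_comm, Nat.mod_mul_right_div_self]

lemma digit_mod_factorial {i k : ℕ} (h : i < k) (n : ℕ) : digit i (n % k !) = digit i n := by
  rw [digit_eq_mod_div, digit_eq_mod_div, Nat.mod_mod_of_dvd _ (factorial_dvd_factorial h)]

lemma digit_eq_of_div_eq {i k n m : ℕ} (h : k ≤ i) (hnm : n / k ! = m / k !) :
    digit i n = digit i m := by
  have hi : i ! = k ! * (i ! / k !) := (Nat.mul_div_cancel' (factorial_dvd_factorial h)).symm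
  rw [digit, digit, hi, ← Nat.div_div_eq_div_mul, ← Nat.div_div_eq_div_mul, hnm]

-- the low `k` factorial-base digits of `n` read in the opposite order, as a number in the mixed
-- radix `k, k-1, …, 1`
def reverse : ℕ → ℕ → ℕ
  | 0, _ => 0
  | k + 1, n => (k + 1) * reverse k n + digit k n

lemma reverse_lt (k n : ℕ) : reverse k n < k ! := by
  induction k with
  | zero => simp [reverse]
  | succ k ih =>
    calc reverse (k + 1) n < (k + 1) * (reverse k n + 1) := by
          rw [reverse, mul_add_one]; exact Nat.add_lt_add_left (digit_lt k n) _
      _ ≤ (k + 1)! := by rw [factorial_succ]; exact Nat.mul_le_mul_left _ ih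

lemma reverse_mod_factorial (k n : ℕ) : reverse k (n % k !) = reverse k n := by
  induction k generalizing n with
  | zero => rfl
  | succ k ih =>
    have hmod : n % (k + 1)! % k ! = n % k ! :=
      Nat.mod_mod_of_dvd _ (factorial_dvd_factorial k.le_succ)
    rw [reverse, reverse, digit_mod_factorial k.lt_succ_self, ← ih, hmod, ih]

lemma div_factorial_lt_succ {k n : ℕ} (h : n < (k + 1)!) : n / k ! < k + 1 :=
  Nat.div_lt_of_lt_mul (by rwa [factorial_succ, mul_comm] at h)

lemma reverse_succ_of_lt {k n : ℕ} (h : n < (k + 1)!) :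
    reverse (k + 1) n = (k + 1) * reverse k n + n / k ! := by
  rw [reverse, digit, Nat.mod_eq_of_lt (div_factorial_lt_succ h)]

lemma reverse_injOn (k : ℕ) : Set.InjOn (reverse k) (Set.Iio k !) := by
  induction k with
  | zero =>
    intro n hn m hm _
    simp only [Set.mem_Iio, factorial_zero, Nat.lt_one_iff] at hn hm
    rw [hn, hm]
  | succ k ih =>
    intro n hn m hm h
    rw [Set.mem_Iio] at hn hm
    rw [reverse_succ_of_lt hn, reverse_succ_of_lt hm] at h
    have hdiv : n / k ! = m / k ! := by
      simpa [Nat.mul_add_mod, Nat.mod_eq_of_lt (div_factorial_lt_succ hn),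
        Nat.mod_eq_of_lt (div_factorial_lt_succ hm)] using
        congrArg (· % (k + 1)) h
    have hrev : reverse k n = reverse k m := by
      rw [hdiv] at h
      exact Nat.eq_of_mul_eq_mul_left k.succ_pos (Nat.add_right_cancel h)
    have hmod : n % k ! = m % k ! :=
      ih (Nat.mod_lt _ (factorial_pos k)) (Nat.mod_lt _ (factorial_pos k))
        (by rwa [reverse_mod_factorial, reverse_mod_factorial])
    rw [← Nat.div_add_mod n k !, hdiv, hmod, Nat.div_add_mod]

lemma reverse_bijOn (k : ℕ) : Set.BijOn (reverse k) (Set.Iio k !) (Set.Iio k !) :=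
  ((Set.finite_Iio _).injOn_iff_bijOn_of_mapsTo fun n _ => reverse_lt k n).1 (reverse_injOn k)

def partialSum (k n : ℕ) : ℚ := ∑ i ∈ Finset.range k, (digit i n : ℚ) / (i + 1)!

lemma partialSum_eq_reverse_div (k n : ℕ) : partialSum k n = reverse k n / k ! := by
  induction k with
  | zero => simp [partialSum, reverse]
  | succ k ih =>
    rw [partialSum, Finset.sum_range_succ, ← partialSum, ih, reverse, factorial_succ]
    push_cast
    field_simp

lemma partialSum_mem_Ico (k n : ℕ) : partialSum k n ∈ Set.Ico (0 : ℚ) 1 := by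
  rw [partialSum_eq_reverse_div]
  refine ⟨by positivity, (div_lt_one (by positivity)).2 (by exact_mod_cast reverse_lt k n)⟩

lemma partialSum_mod_factorial (k n : ℕ) : partialSum k (n % k !) = partialSum k n := by
  rw [partialSum_eq_reverse_div, partialSum_eq_reverse_div, reverse_mod_factorial]

lemma partialSum_eq_of_le {k K n : ℕ} (hkK : k ≤ K) (h : n < k !) :
    partialSum K n = partialSum k n := by
  induction K, hkK using Nat.le_induction with
  | base => rfl
  | succ K hkK ih =>
    rw [partialSum, Finset.sum_range_succ, ← partialSum, ih,
      digit_eq_zero_of_lt (h.trans_le (factorial_le hkK))]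
    simp

lemma partialSum_sub_eq_of_div_eq {k K n m : ℕ} (hkK : k ≤ K) (hnm : n / k ! = m / k !) :
    partialSum K n - partialSum k n = partialSum K m - partialSum k m := by
  induction K, hkK using Nat.le_induction with
  | base => simp
  | succ K hkK ih =>
    simp only [partialSum, Finset.sum_range_succ] at ih ⊢
    rw [digit_eq_of_div_eq hkK hnm]
    linarith

lemma exists_partialSum_eq (k : ℕ) (B : ℤ) :
    ∃ j < k !, (partialSum k j : ℚ/ℤ) = ((B / k ! : ℚ) : ℚ/ℤ) := by
  have hpos : (0 : ℤ) < k ! := by exact_mod_cast factorial_pos k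
  have hA : (B % k !).toNat < k ! := by
    have := Int.emod_lt_of_pos B hpos; omega
  obtain ⟨j, hj, hrev⟩ := (reverse_bijOn k).surjOn hA
  refine ⟨j, hj, ?_⟩
  have hB : (B : ℚ) / k ! = (B % k !).toNat / k ! + ((B / k ! : ℤ) : ℚ) := by
    have h : (B : ℚ) = (B % k !).toNat + k ! * ((B / k ! : ℤ) : ℚ) := by
      have hZ : B = (B % k !).toNat + k ! * (B / k !) := by
        rw [Int.toNat_of_nonneg (Int.emod_nonneg B hpos.ne'), Int.emod_add_mul_ediv]
      exact_mod_cast hZ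
    rw [h]
    field_simp
  rw [hB, QuotientAddGroup.mk_add_of_mem _ (AddSubgroup.intCast_mem_zmultiples_one _),
    partialSum_eq_reverse_div, hrev]

lemma partialSum_injOn (k : ℕ) : Set.InjOn (partialSum k) (Set.Iio k !) := by
  intro n hn m hm h
  rw [partialSum_eq_reverse_div, partialSum_eq_reverse_div,
    div_left_inj' (by positivity), Nat.cast_inj] at h
  exact reverse_injOn k hn hm h

def toAddCircle (n : ℕ) : ℚ/ℤ := (partialSum (n + 1) n : ℚ)

lemma toAddCircle_eq {k n : ℕ} (h : n < k !) : toAddCircle n = (partialSum k n : ℚ/ℤ) := by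
  have hn : n < (n + 1)! := n.lt_succ_self.trans_le (self_le_factorial _)
  rw [toAddCircle, ← partialSum_eq_of_le (le_max_left _ k) hn,
    partialSum_eq_of_le (le_max_right _ _) h]

lemma toAddCircle_zero : toAddCircle 0 = 0 := by
  simp [toAddCircle, partialSum, digit]

lemma toAddCircle_injective : Function.Injective toAddCircle := by
  intro n m h
  set K := max n m + 1
  have hK : max n m < K ! := (Nat.lt_succ_self _).trans_le (self_le_factorial _)
  have hn : n < K ! := (le_max_left n m).trans_lt hK
  have hm : m < K ! := (le_max_right n m).trans_lt hK
  have hIco (j : ℕ) : partialSum K j ∈ Set.Ico (0 : ℚ) (0 + 1) := by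
    rw [zero_add]; exact partialSum_mem_Ico K j
  rw [toAddCircle_eq hn, toAddCircle_eq hm,
    AddCircle.coe_eq_coe_iff_of_mem_Ico (hIco n) (hIco m)] at h
  exact partialSum_injOn K hn hm h

lemma exists_toAddCircle_eq_add (g : ℚ/ℤ) :
    ∃ k, ∀ n, ∃ m, m / k ! = n / k ! ∧ toAddCircle m = g + toAddCircle n := by
  obtain ⟨x, rfl⟩ := QuotientAddGroup.mk_surjective g
  obtain ⟨k, B, rfl⟩ := Rat.exists_eq_intCast_div_factorial x
  refine ⟨k, fun n => ?_⟩
  obtain ⟨j, hj, hsum⟩ := exists_partialSum_eq k (B + reverse k n)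
  set m := j + k ! * (n / k !)
  have hm_div : m / k ! = n / k ! := by
    rw [Nat.add_mul_div_left _ _ (factorial_pos k), Nat.div_eq_of_lt hj, zero_add]
  have hm_mod : m % k ! = j := by rw [Nat.add_mul_mod_self_left, Nat.mod_eq_of_lt hj]
  refine ⟨m, hm_div, ?_⟩
  set K := max k (max n m + 1)
  have hK : max n m < K ! :=
    (Nat.lt_succ_self _).trans_le ((le_max_right _ _).trans (self_le_factorial K))
  have hn : n < K ! := (le_max_left n m).trans_lt hK
  have hm : m < K ! := (le_max_right n m).trans_lt hK
  -- `m` and `n` share their digits from position `k` on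
  have hsplit := partialSum_sub_eq_of_div_eq (K := K) (le_max_left _ _) hm_div
  rw [← partialSum_mod_factorial k m, hm_mod] at hsplit
  have hsum_m : partialSum K m = partialSum k j + (partialSum K n - partialSum k n) := by
    linarith
  rw [toAddCircle_eq hm, toAddCircle_eq hn, hsum_m, AddCircle.coe_add, hsum,
    ← AddCircle.coe_add, ← AddCircle.coe_add, partialSum_eq_reverse_div k n]
  congr 1
  push_cast
  ring

lemma toAddCircle_surjective : Function.Surjective toAddCircle := fun g => by
  obtain ⟨k, hk⟩ := exists_toAddCircle_eq_add g
  obtain ⟨m, -, hm⟩ := hk 0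
  exact ⟨m, by rw [hm, toAddCircle_zero, add_zero]⟩

noncomputable def equivAddCircle : ℕ ≃ ℚ/ℤ :=
  Equiv.ofBijective toAddCircle ⟨toAddCircle_injective, toAddCircle_surjective⟩

lemma translationHom_mem_Bd (g : Multiplicative (ℚ/ℤ)) :
    translationHom equivAddCircle g ∈ Bd ℕ := by
  obtain ⟨k, hk⟩ := exists_toAddCircle_eq_add g.toAdd
  refine mem_Bd_of_div_eq (factorial_pos k) fun n => ?_
  obtain ⟨m, hdiv, hm⟩ := hk n
  rwa [translationHom_apply, (Equiv.symm_apply_eq _).2 hm.symm]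

end FactorialBase

end

-- `ℕ` stands for `ℤ⁺`, isometric to it via `n ↦ n + 1`.
/-- `Bd(ℤ⁺)` (positive integers modelled by `ℕ`) contains a
subgroup isomorphic to `ℚ/ℤ`. -/
theorem bd_contains_Q_mod_Z :
    ∃ φ : Multiplicative (ℚ ⧸ AddSubgroup.zmultiples (1 : ℚ)) →* Bd ℕ,
      Function.Injective φ :=
  ⟨(translationHom FactorialBase.equivAddCircle).codRestrict _
      FactorialBase.translationHom_mem_Bd,
    fun _ _ h => translationHom_injective _ (congrArg Subtype.val h)⟩
end

section
/- The group Bd(ℤ⁺) contains a subgroup isomorphic to ℤ ⊕ ℚ/ℤ. -/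
open Equiv Finset

section
open scoped Nat

lemma mem_Bd_nat_iff {g : Perm ℕ} : g ∈ Bd ℕ ↔ ∃ r : ℕ, ∀ n, n ≤ g n + r ∧ g n ≤ n + r := by
  have key (m n r : ℕ) : dist m n ≤ r ↔ m ≤ n + r ∧ n ≤ m + r := by
    rw [Nat.dist_eq, abs_sub_le_iff, sub_le_iff_le_add, sub_le_iff_le_add, add_comm (r : ℝ),
      add_comm (r : ℝ)]
    norm_cast
  exact exists_congr fun r => forall_congr' fun n => key n (g n) r

section Regular

variable {G : Type*} [Group G]

def regularPerm (e : G ≃ ℕ) : G →* Perm ℕ :=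
  e.permCongrHom.toMonoidHom.comp (MulAction.toPermHom G G)

lemma regularPerm_apply (e : G ≃ ℕ) (g : G) (n : ℕ) : regularPerm e g n = e (g * e.symm n) := rfl

lemma regularPerm_injective (e : G ≃ ℕ) : Function.Injective (regularPerm e) :=
  e.permCongrHom.injective.comp MulAction.toPerm_injective

lemma regularPerm_mem_Bd {e : G ≃ ℕ} {g : G} {r : ℕ}
    (h : ∀ x, e x ≤ e (g * x) + r ∧ e (g * x) ≤ e x + r) : regularPerm e g ∈ Bd ℕ :=
  mem_Bd_nat_iff.mpr ⟨r, fun n => by simpa [regularPerm_apply] using h (e.symm n)⟩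

def BoundedLeftMul (e : G ≃ ℕ) : Prop :=
  ∀ g, ∃ r : ℕ, ∀ x, e x ≤ e (g * x) + r ∧ e (g * x) ≤ e x + r

def regularBd (e : G ≃ ℕ) (h : BoundedLeftMul e) : G →* Bd ℕ :=
  (regularPerm e).codRestrict _ fun g => (h g).elim fun _ => regularPerm_mem_Bd

lemma regularBd_injective (e : G ≃ ℕ) (h : BoundedLeftMul e) : Function.Injective (regularBd e h) :=
  fun _ _ hgh => regularPerm_injective e (congrArg Subtype.val hgh)

end Regular

def sumNatPerm : Perm ℕ × Perm ℕ →* Perm ℕ :=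
  natSumNatEquivNat.permCongrHom.toMonoidHom.comp (Perm.sumCongrHom ℕ ℕ)

lemma sumNatPerm_apply (σ τ : Perm ℕ) (n : ℕ) :
    sumNatPerm (σ, τ) n = natSumNatEquivNat (Perm.sumCongr σ τ (natSumNatEquivNat.symm n)) := rfl

lemma sumNatPerm_mem_Bd {σ τ : Perm ℕ} (hσ : σ ∈ Bd ℕ) (hτ : τ ∈ Bd ℕ) :
    sumNatPerm (σ, τ) ∈ Bd ℕ := by
  obtain ⟨r, hr⟩ := mem_Bd_nat_iff.mp hσ
  obtain ⟨s, hs⟩ := mem_Bd_nat_iff.mp hτ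
  refine mem_Bd_nat_iff.mpr ⟨2 * (r + s), fun n => ?_⟩
  obtain ⟨k | k, rfl⟩ := natSumNatEquivNat.surjective n
  all_goals
    rw [sumNatPerm_apply, symm_apply_apply]
    simp only [Perm.sumCongr_apply, Sum.map_inl, Sum.map_inr, natSumNatEquivNat_apply,
      Sum.elim_inl, Sum.elim_inr]
  · have := hr k
    omega
  · have := hs k
    omega

def sumBd : Bd ℕ × Bd ℕ →* Bd ℕ :=
  (sumNatPerm.comp ((Bd ℕ).subtype.prodMap (Bd ℕ).subtype)).codRestrict _
    fun p => sumNatPerm_mem_Bd p.1.2 p.2.2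

lemma sumBd_injective : Function.Injective sumBd :=
  fun _ _ h => ((natSumNatEquivNat.permCongrHom.injective.comp Perm.sumCongrHom_injective).comp
    (Subtype.val_injective.prodMap Subtype.val_injective)) (congrArg Subtype.val h)

lemma intEquivNat_cast (z : ℤ) : (intEquivNat z : ℤ) = if 0 ≤ z then 2 * z else -2 * z - 1 := by
  rcases z with n | n
  · show ((natSumNatEquivNat (.inl n) : ℕ) : ℤ) = _
    simp
  · show ((natSumNatEquivNat (.inr n) : ℕ) : ℤ) = _
    simp only [natSumNatEquivNat_apply, Sum.elim_inr, Nat.cast_add, Nat.cast_mul, Nat.cast_ofNat,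
      Nat.cast_one, Int.negSucc_eq]
    omega

lemma intEquivNat_add_le (a z : ℤ) :
    intEquivNat z ≤ intEquivNat (a + z) + (2 * a.natAbs + 1) ∧
      intEquivNat (a + z) ≤ intEquivNat z + (2 * a.natAbs + 1) := by
  zify
  rw [intEquivNat_cast, intEquivNat_cast]
  have := le_abs_self a
  have := neg_abs_le a
  split_ifs <;> omega

def factorialLattice (T : ℕ) : AddSubgroup ℚ := AddSubgroup.zmultiples ((T ! : ℚ)⁻¹)

lemma mem_factorialLattice {T : ℕ} {x : ℚ} :
    x ∈ factorialLattice T ↔ ∃ k : ℤ, (T ! : ℚ) * x = k := by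
  have hT : (T ! : ℚ) ≠ 0 := by positivity
  simp only [factorialLattice, AddSubgroup.mem_zmultiples_iff, zsmul_eq_mul]
  refine exists_congr fun k => ?_
  constructor <;> intro h
  · rw [← h]; field_simp
  · rw [← mul_left_cancel_iff_of_pos (by positivity : (0 : ℚ) < T !), h]; field_simp

lemma factorialLattice_zero : factorialLattice 0 = AddSubgroup.zmultiples 1 := by
  simp [factorialLattice]

lemma factorialLattice_mono : Monotone factorialLattice := by
  intro T S hTS x hx
  obtain ⟨k, hk⟩ := mem_factorialLattice.mp hx
  obtain ⟨c, hc⟩ := Nat.factorial_dvd_factorial hTS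
  exact mem_factorialLattice.mpr ⟨c * k, by rw [hc]; push_cast; rw [← hk]; ring⟩

lemma exists_mem_factorialLattice (x : ℚ) : ∃ T, x ∈ factorialLattice T := by
  obtain ⟨c, hc⟩ := Nat.dvd_factorial x.den_pos le_rfl
  refine ⟨x.den, mem_factorialLattice.mpr ⟨c * x.num, ?_⟩⟩
  push_cast [hc]
  rw [← Rat.mul_den_eq_num]
  ring

def factorialDigit (j : ℕ) (x : ℚ) : ℕ := ⌊(j + 1 : ℚ) * Int.fract (j ! * x)⌋₊

lemma factorialDigit_le (j : ℕ) (x : ℚ) : factorialDigit j x ≤ j := by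
  have hlt : (j + 1 : ℚ) * Int.fract (j ! * x) < j + 1 :=
    mul_lt_of_lt_one_right (by positivity) (Int.fract_lt_one _)
  exact Nat.lt_succ_iff.mp ((Nat.floor_lt (by positivity)).mpr (by exact_mod_cast hlt))

lemma factorialDigit_add_of_mem {j : ℕ} {y : ℚ} (hy : y ∈ factorialLattice j) (x : ℚ) :
    factorialDigit j (y + x) = factorialDigit j x := by
  obtain ⟨k, hk⟩ := mem_factorialLattice.mp hy
  rw [factorialDigit, mul_add, hk, Int.fract_intCast_add, factorialDigit]

lemma factorialDigit_eq_zero_of_mem {j : ℕ} {x : ℚ} (hx : x ∈ factorialLattice j) :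
    factorialDigit j x = 0 := by
  simpa [factorialDigit] using factorialDigit_add_of_mem hx 0

lemma factorialDigit_div_factorial (j : ℕ) (x : ℚ) :
    (factorialDigit j x : ℚ) / (j + 1)! =
      Int.fract (j ! * x) / (j ! : ℚ) - Int.fract ((j + 1)! * x) / (j + 1)! := by
  set f := Int.fract ((j ! : ℚ) * x)
  have hsplit : ((j + 1)! : ℚ) * x = ((j + 1) * ⌊(j ! : ℚ) * x⌋ : ℤ) + (j + 1) * f := by
    simp only [f, Int.fract]
    push_cast [Nat.factorial_succ]
    ring
  have hfloor : (factorialDigit j x : ℚ) = (j + 1) * f - Int.fract ((j + 1) * f) := by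
    rw [factorialDigit, natCast_floor_eq_intCast_floor (by positivity)]
    linarith [Int.floor_add_fract ((j + 1 : ℚ) * f)]
  rw [hsplit, Int.fract_intCast_add, hfloor, Nat.factorial_succ]
  push_cast
  field_simp

lemma sum_factorialDigit_div_factorial (T : ℕ) (x : ℚ) :
    ∑ j ∈ range T, (factorialDigit j x : ℚ) / (j + 1)! =
      Int.fract x - Int.fract (T ! * x) / (T ! : ℚ) := by
  induction T with
  | zero => simp
  | succ T ih => rw [sum_range_succ, ih, factorialDigit_div_factorial]; ring

lemma Nat.sum_range_mul_factorial_lt {d : ℕ → ℕ} (hd : ∀ j, d j ≤ j) (T : ℕ) :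
    ∑ j ∈ range T, d j * j ! < T ! := by
  induction T with
  | zero => simp
  | succ T ih =>
    rw [sum_range_succ, Nat.factorial_succ]
    nlinarith [hd T]

lemma Nat.eq_of_sum_range_mul_factorial_eq {d e : ℕ → ℕ} (hd : ∀ j, d j ≤ j) (he : ∀ j, e j ≤ j)
    {T : ℕ} (h : ∑ j ∈ range T, d j * j ! = ∑ j ∈ range T, e j * j !) :
    ∀ j < T, d j = e j := by
  induction T with
  | zero => simp
  | succ T ih =>
    rw [sum_range_succ, sum_range_succ] at h
    have hlow := congrArg (· % T !) h
    have hhigh := congrArg (· / T !) h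
    simp only [Nat.add_mul_mod_self_right, Nat.add_mul_div_right _ _ T.factorial_pos,
      Nat.mod_eq_of_lt (Nat.sum_range_mul_factorial_lt hd T),
      Nat.mod_eq_of_lt (Nat.sum_range_mul_factorial_lt he T),
      Nat.div_eq_of_lt (Nat.sum_range_mul_factorial_lt hd T),
      Nat.div_eq_of_lt (Nat.sum_range_mul_factorial_lt he T), zero_add] at hlow hhigh
    intro j hj
    rcases Nat.lt_succ_iff_lt_or_eq.mp hj with hj | rfl
    · exact ih hlow j hj
    · exact hhigh

noncomputable def factorialCode (x : ℚ) : ℕ := ∑ᶠ j, factorialDigit j x * j !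

lemma factorialCode_eq_sum {T : ℕ} {x : ℚ} (hx : x ∈ factorialLattice T) :
    factorialCode x = ∑ j ∈ range T, factorialDigit j x * j ! := by
  refine finsum_eq_sum_of_support_subset _ fun j hj => ?_
  by_contra hjT
  simp only [coe_range, Set.mem_Iio, not_lt] at hjT
  exact hj (by simp [factorialDigit_eq_zero_of_mem (factorialLattice_mono hjT hx)])

lemma factorialCode_lt {T : ℕ} {x : ℚ} (hx : x ∈ factorialLattice T) : factorialCode x < T ! :=
  factorialCode_eq_sum hx ▸ Nat.sum_range_mul_factorial_lt (factorialDigit_le · x) T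

lemma factorialCode_add_of_mem_zero {y : ℚ} (hy : y ∈ factorialLattice 0) (x : ℚ) :
    factorialCode (y + x) = factorialCode x :=
  finsum_congr fun j => by
    rw [factorialDigit_add_of_mem (factorialLattice_mono (Nat.zero_le j) hy)]

lemma fract_eq_of_factorialCode_eq {x y : ℚ} (h : factorialCode x = factorialCode y) :
    Int.fract x = Int.fract y := by
  obtain ⟨S, hS⟩ := exists_mem_factorialLattice x
  obtain ⟨S', hS'⟩ := exists_mem_factorialLattice y
  obtain ⟨T, hST, hS'T⟩ : ∃ T, S ≤ T ∧ S' ≤ T := ⟨max S S', le_max_left S S', le_max_right S S'⟩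
  have hx := factorialLattice_mono hST hS
  have hy := factorialLattice_mono hS'T hS'
  have hdigits := Nat.eq_of_sum_range_mul_factorial_eq (factorialDigit_le · x)
    (factorialDigit_le · y)
    ((factorialCode_eq_sum hx).symm.trans (h.trans (factorialCode_eq_sum hy)))
  have hfract {z : ℚ} (hz : z ∈ factorialLattice T) :
      Int.fract z = ∑ j ∈ range T, (factorialDigit j z : ℚ) / (j + 1)! := by
    obtain ⟨k, hk⟩ := mem_factorialLattice.mp hz
    rw [sum_factorialDigit_div_factorial, hk, Int.fract_intCast, zero_div, sub_zero]
  rw [hfract hx, hfract hy]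
  exact sum_congr rfl fun j hj => by rw [hdigits j (mem_range.mp hj)]

lemma factorialCode_eq_iff {x y : ℚ} :
    factorialCode x = factorialCode y ↔ -x + y ∈ AddSubgroup.zmultiples 1 := by
  rw [← factorialLattice_zero]
  constructor
  · intro h
    obtain ⟨k, hk⟩ := Int.fract_eq_fract.mp (fract_eq_of_factorialCode_eq h)
    refine mem_factorialLattice.mpr ⟨-k, ?_⟩
    rw [Nat.factorial_zero, Nat.cast_one, one_mul, Int.cast_neg, ← hk]
    ring
  · intro h
    rw [← factorialCode_add_of_mem_zero h x, add_comm, add_neg_cancel_left]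

lemma factorialCode_surjective : Function.Surjective factorialCode := by
  intro N
  set T := N + 1
  have hmem (k : ℕ) : (k / T ! : ℚ) ∈ factorialLattice T :=
    mem_factorialLattice.mpr ⟨k, by rw [Int.cast_natCast]; field_simp⟩
  let f : Fin T ! → Fin T ! := fun k => ⟨factorialCode (k / T !), factorialCode_lt (hmem k)⟩
  have hf : Function.Injective f := by
    intro k l hkl
    have hfr := fract_eq_of_factorialCode_eq (congrArg Fin.val hkl)
    have hunit {m : Fin T !} : (m / T ! : ℚ) ∈ Set.Ico 0 1 :=
      ⟨by positivity, (div_lt_one (by positivity)).mpr (by exact_mod_cast m.isLt)⟩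
    rw [Int.fract_eq_self.mpr hunit, Int.fract_eq_self.mpr hunit] at hfr
    exact Fin.ext (by exact_mod_cast (div_left_inj' (by positivity)).mp hfr)
  obtain ⟨k, hk⟩ := Finite.injective_iff_surjective.mp hf
    ⟨N, (Nat.lt_succ_self N).trans_le (Nat.self_le_factorial T)⟩
  exact ⟨_, congrArg Fin.val hk⟩

lemma factorialCode_add_le {m : ℕ} {y : ℚ} (hy : y ∈ factorialLattice m) (x : ℚ) :
    factorialCode x ≤ factorialCode (y + x) + m ! ∧
      factorialCode (y + x) ≤ factorialCode x + m ! := by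
  obtain ⟨S, hS⟩ := exists_mem_factorialLattice x
  obtain ⟨S', hS'⟩ := exists_mem_factorialLattice (y + x)
  obtain ⟨T, hmT, hST, hS'T⟩ : ∃ T, m ≤ T ∧ S ≤ T ∧ S' ≤ T :=
    ⟨max m (max S S'), by omega, by omega, by omega⟩
  have hsplit {z : ℚ} (hz : z ∈ factorialLattice T) := factorialCode_eq_sum hz ▸
    (sum_range_add_sum_Ico (fun j => factorialDigit j z * j !) hmT).symm
  have hhigh : ∑ j ∈ Ico m T, factorialDigit j (y + x) * j ! =
      ∑ j ∈ Ico m T, factorialDigit j x * j ! :=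
    sum_congr rfl fun j hj => by
      rw [factorialDigit_add_of_mem (factorialLattice_mono (mem_Ico.mp hj).1 hy)]
  rw [hsplit (factorialLattice_mono hST hS), hsplit (factorialLattice_mono hS'T hS'), hhigh]
  have := Nat.sum_range_mul_factorial_lt (factorialDigit_le · x) m
  have := Nat.sum_range_mul_factorial_lt (factorialDigit_le · (y + x)) m
  omega

noncomputable def factorialCodeMod (q : ℚ ⧸ AddSubgroup.zmultiples (1 : ℚ)) : ℕ :=
  q.liftOn' factorialCode fun _ _ h =>
    factorialCode_eq_iff.mpr (QuotientAddGroup.leftRel_apply.mp h)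

lemma factorialCodeMod_bijective : Function.Bijective factorialCodeMod := by
  constructor
  · rintro ⟨x⟩ ⟨y⟩ h
    exact QuotientAddGroup.eq.mpr (factorialCode_eq_iff.mp h)
  · intro N
    obtain ⟨x, hx⟩ := factorialCode_surjective N
    exact ⟨x, hx⟩

noncomputable def ratModIntBd : Multiplicative (ℚ ⧸ AddSubgroup.zmultiples (1 : ℚ)) →* Bd ℕ :=
  regularBd (Multiplicative.toAdd.trans (.ofBijective _ factorialCodeMod_bijective)) fun g => by
    obtain ⟨y, rfl⟩ := (Multiplicative.ofAdd.surjective.comp QuotientAddGroup.mk_surjective) g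
    obtain ⟨m, hm⟩ := exists_mem_factorialLattice y
    refine ⟨m !, fun x => ?_⟩
    obtain ⟨x, rfl⟩ := (Multiplicative.ofAdd.surjective.comp QuotientAddGroup.mk_surjective) x
    exact factorialCode_add_le hm x

def intBd : Multiplicative ℤ →* Bd ℕ :=
  regularBd (Multiplicative.toAdd.trans intEquivNat) fun a =>
    ⟨_, fun x => intEquivNat_add_le a.toAdd x.toAdd⟩

end

/-- `Bd(ℤ⁺)` (positive integers modelled by `ℕ`) contains a
subgroup isomorphic to `ℤ ⊕ ℚ/ℤ`. -/
theorem bd_contains_Z_plus_Q_mod_Z :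
    ∃ φ : Multiplicative (ℤ × (ℚ ⧸ AddSubgroup.zmultiples (1 : ℚ))) →* Bd ℕ,
      Function.Injective φ := by
  refine ⟨sumBd.comp ((intBd.prodMap ratModIntBd).comp
    (MulEquiv.prodMultiplicative _ _).toMonoidHom), ?_⟩
  simp only [MonoidHom.coe_comp, MonoidHom.coe_prodMap]
  exact sumBd_injective.comp (((regularBd_injective _ _).prodMap (regularBd_injective _ _)).comp
    (MulEquiv.prodMultiplicative _ _).injective)
end

section
/- Let (X,d) be a metric space satisfying: (1) for every r ∈ ℤ⁺ there is s ∈ ℤ⁺ such that every closed ball of radius r in X has at most s points; and (2) for every r₁ ∈ ℤ⁺ there is t ∈ ℤ⁺ such that for every r₂ ∈ ℤ⁺ there is r₃ ∈ ℤ⁺ such that whenever x, y ∈ X with d(x,y) ≥ r₃, there exists Y ⊆ X with |Y| ≤ t and the property that for all z, w ∈ X with d(x,z) ≤ r₂ and d(y,w) ≤ r₂, every r₁-chain from z to w contains an element of Y. Then every infinitely divisible element of Bd(X,d) is torsion. -/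
private lemma perm_pow_fix_of_eq {X : Type*} (f : Equiv.Perm X) (x : X) {b c : ℕ} (hbc : b ≤ c)
    (he : (f ^ b) x = (f ^ c) x) : (f ^ (c - b)) x = x := by
  have h1 : (f ^ b) ((f ^ (c - b)) x) = (f ^ b) x := by
    rw [← Equiv.Perm.mul_apply, ← pow_add, Nat.add_sub_cancel' hbc, ← he]
  exact (f ^ b).injective h1

private lemma perm_pow_fix_mul {X : Type*} (f : Equiv.Perm X) (x : X) (p q : ℕ)
    (hf : (f ^ p) x = x) : (f ^ (p * q)) x = x := by
  induction q with
  | zero => simp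
  | succ q ih =>
      have h1 : f ^ (p * (q + 1)) = f ^ (p * q) * f ^ p := by
        rw [← pow_add, Nat.mul_succ]
      rw [h1, Equiv.Perm.mul_apply, hf, ih]

private lemma perm_pow_dist_le {X : Type*} [MetricSpace X] (f : Equiv.Perm X) {ρ : ℝ}
    (hf : ∀ y, dist y (f y) ≤ ρ) (x : X) : ∀ i : ℕ, dist x ((f ^ i) x) ≤ i * ρ
  | 0 => by simp
  | (i + 1) => by
      have h1 : (f ^ (i + 1)) x = f ((f ^ i) x) := by
        rw [pow_succ', Equiv.Perm.mul_apply]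
      calc dist x ((f ^ (i + 1)) x)
          ≤ dist x ((f ^ i) x) + dist ((f ^ i) x) ((f ^ (i + 1)) x) := dist_triangle _ _ _
        _ ≤ i * ρ + ρ := add_le_add (perm_pow_dist_le f hf x i) (by rw [h1]; exact hf _)
        _ = ((i + 1 : ℕ) : ℝ) * ρ := by push_cast; ring



/-- Proposition: technical separation criterion: if balls of each
radius in `X` have uniformly bounded cardinality, and points far apart can be
separated by uniformly small sets meeting every `r₁`-chain, then every
infinitely divisible element of `Bd(X, d)` is torsion. -/
theorem infinitely_divisible_torsion_of_separation (X : Type*) [MetricSpace X]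
    (hball : ∀ r : ℕ, 0 < r → ∃ s : ℕ, 0 < s ∧ ∀ x : X,
      (Metric.closedBall x (r : ℝ)).Finite ∧ (Metric.closedBall x (r : ℝ)).ncard ≤ s)
    (hsep : ∀ r₁ : ℕ, 0 < r₁ → ∃ t : ℕ, 0 < t ∧ ∀ r₂ : ℕ, 0 < r₂ → ∃ r₃ : ℕ, 0 < r₃ ∧
      ∀ x y : X, (r₃ : ℝ) ≤ dist x y →
        ∃ Y : Finset X, Y.card ≤ t ∧
          ∀ z w : X, dist x z ≤ (r₂ : ℝ) → dist y w ≤ (r₂ : ℝ) →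
            ∀ k : ℕ, ∀ c : Fin (k + 1) → X, c 0 = z → c (Fin.last k) = w →
              (∀ i : Fin k, dist (c i.castSucc) (c i.succ) ≤ (r₁ : ℝ)) →
              ∃ i : Fin (k + 1), c i ∈ Y)
    (g : Equiv.Perm X) (hg : ∃ r : ℕ, ∀ x : X, dist x (g x) ≤ (r : ℝ))
    (hdiv : {n : ℕ | 0 < n ∧ ∃ h : Equiv.Perm X,
      (∃ r : ℕ, ∀ x : X, dist x (h x) ≤ (r : ℝ)) ∧ h ^ n = g}.Infinite) :
    IsOfFinOrder g := by
  classical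
  obtain ⟨r₀, hr₀⟩ := hg
  set r : ℕ := r₀ + 1 with hrdef
  have hr : ∀ x : X, dist x (g x) ≤ (r : ℝ) := by
    intro x
    refine (hr₀ x).trans ?_
    push_cast [hrdef]; linarith
  obtain ⟨t, ht, hsep1⟩ := hsep r (by omega)
  obtain ⟨n, hnS, hn⟩ := hdiv.exists_gt (2 * t)
  obtain ⟨hn0, h, ⟨ρ₀, hρ₀⟩, hpow⟩ := hnS
  set ρ : ℕ := ρ₀ + 1 with hρdef
  have hρ : ∀ x : X, dist x (h x) ≤ (ρ : ℝ) := by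
    intro x
    refine (hρ₀ x).trans ?_
    push_cast [hρdef]; linarith
  obtain ⟨r₃, hr₃, hsep2⟩ := hsep1 (n * ρ) (by positivity)
  obtain ⟨s, hs, hball2⟩ := hball r₃ hr₃
  set N : ℕ := 2 * t * (s + 1) + s with hNdef
  have key : ∀ x : X, ∃ p : ℕ, 0 < p ∧ p ≤ N ∧ (g ^ p) x = x := by
    intro x
    by_cases hcase : ∀ j : ℕ, j ≤ s → dist x ((g ^ j) x) < (r₃ : ℝ)
    · -- narrow case: pigeonhole in a ball
      obtain ⟨hfin, hcard⟩ := hball2 x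
      have hmaps : ∀ j : Fin (s + 1), (g ^ (j : ℕ)) x ∈ hfin.toFinset := by
        intro j
        rw [Set.Finite.mem_toFinset, Metric.mem_closedBall, dist_comm]
        exact le_of_lt (hcase j (by omega))
      have hlt : hfin.toFinset.card < (Finset.univ : Finset (Fin (s + 1))).card := by
        have h5 : hfin.toFinset.card ≤ s := by
          rw [← Set.ncard_eq_toFinset_card _ hfin]; exact hcard
        simpa using by omega
      obtain ⟨i, -, j, -, hne, heq⟩ :=
        Finset.exists_ne_map_eq_of_card_lt_of_maps_to hlt (fun j _ => hmaps j)
      have hvne : (i : ℕ) ≠ (j : ℕ) := fun hv => hne (Fin.ext hv)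
      rcases Nat.le_total (i : ℕ) (j : ℕ) with hle | hle
      · exact ⟨(j : ℕ) - (i : ℕ), by omega, by omega,
          perm_pow_fix_of_eq g x hle heq⟩
      · exact ⟨(i : ℕ) - (j : ℕ), by omega, by omega,
          perm_pow_fix_of_eq g x hle heq.symm⟩
    · -- wide case
      push_neg at hcase
      obtain ⟨K, hKs, hKdist⟩ := hcase
      obtain ⟨Y, hYcard, hY⟩ := hsep2 x ((g ^ K) x) hKdist
      -- each translated chain meets Y
      have hchain : ∀ i : Fin n, ∃ e : ℕ, e < n * (K + 1) ∧ e % n = (i : ℕ) ∧ (h ^ e) x ∈ Y := by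
        intro i
        have hρ0 : (0 : ℝ) ≤ (ρ : ℝ) := by positivity
        have hin : ((i : ℕ) : ℝ) ≤ (n : ℝ) := by exact_mod_cast le_of_lt i.isLt
        have hdz : dist x ((h ^ (i : ℕ)) x) ≤ ((n * ρ : ℕ) : ℝ) := by
          refine (perm_pow_dist_le h hρ x (i : ℕ)).trans ?_
          push_cast
          nlinarith
        have hww : (h ^ ((i : ℕ) + n * K)) x = (h ^ (i : ℕ)) ((g ^ K) x) := by
          rw [← hpow, ← pow_mul, ← Equiv.Perm.mul_apply, ← pow_add]
        have hdw : dist ((g ^ K) x) ((h ^ ((i : ℕ) + n * K)) x) ≤ ((n * ρ : ℕ) : ℝ) := by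
          rw [hww]
          refine (perm_pow_dist_le h hρ ((g ^ K) x) (i : ℕ)).trans ?_
          push_cast
          nlinarith
        have hstep : ∀ j : Fin K,
            dist ((fun j : Fin (K + 1) => (h ^ ((i : ℕ) + n * (j : ℕ))) x) j.castSucc)
              ((fun j : Fin (K + 1) => (h ^ ((i : ℕ) + n * (j : ℕ))) x) j.succ) ≤ (r : ℝ) := by
          intro j
          simp only [Fin.coe_castSucc, Fin.val_succ]
          have h2 : (h ^ ((i : ℕ) + n * ((j : ℕ) + 1))) x
              = g ((h ^ ((i : ℕ) + n * (j : ℕ))) x) := by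
            rw [← hpow, ← Equiv.Perm.mul_apply, ← pow_add]
            congr 1
            ring_nf
          rw [h2]
          exact hr _
        obtain ⟨jf, hjf⟩ := hY ((h ^ (i : ℕ)) x) ((h ^ ((i : ℕ) + n * K)) x) hdz hdw K
          (fun j : Fin (K + 1) => (h ^ ((i : ℕ) + n * (j : ℕ))) x)
          (by simp) (by simp only [Fin.val_last]) hstep
        refine ⟨(i : ℕ) + n * (jf : ℕ), ?_, ?_, hjf⟩
        · have h3 : n * (jf : ℕ) ≤ n * K := Nat.mul_le_mul_left n (by omega)
          have h4 : (i : ℕ) < n := i.isLt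
          have h5 : n * (K + 1) = n + n * K := by ring
          omega
        · rw [Nat.add_mul_mod_self_left, Nat.mod_eq_of_lt i.isLt]
      choose E hE1 hE2 hE3 using hchain
      -- existence of an h-period of x
      have hperiod : ∃ d : ℕ, 0 < d ∧ (h ^ d) x = x := by
        have hcardlt : Y.card < (Finset.univ : Finset (Fin n)).card := by
          have : Y.card < n := by omega
          simpa using this
        obtain ⟨i, -, i', -, hne, heq⟩ :=
          Finset.exists_ne_map_eq_of_card_lt_of_maps_to hcardlt (fun i _ => hE3 i)
        have hEne : E i ≠ E i' := by
          intro hEE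
          exact hne (Fin.ext (by rw [← hE2 i, ← hE2 i', hEE]))
        rcases Nat.le_total (E i) (E i') with hle | hle
        · exact ⟨E i' - E i, by omega, perm_pow_fix_of_eq h x hle heq⟩
        · exact ⟨E i - E i', by omega, perm_pow_fix_of_eq h x hle heq.symm⟩
      set a : ℕ := Nat.find hperiod with hadef
      have ha0 : 0 < a := (Nat.find_spec hperiod).1
      have ha : (h ^ a) x = x := (Nat.find_spec hperiod).2
      have hdvd : ∀ m : ℕ, (h ^ m) x = x → a ∣ m := by
        intro m hm
        rcases Nat.eq_zero_or_pos (m % a) with h0 | hpos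
        · exact Nat.dvd_of_mod_eq_zero h0
        · exfalso
          have hq : (h ^ (a * (m / a))) x = x := perm_pow_fix_mul h x a (m / a) ha
          have hmod : (h ^ (m % a)) x = x := by
            have h3 : (h ^ (a * (m / a))) ((h ^ (m % a)) x) = (h ^ (a * (m / a))) x := by
              rw [← Equiv.Perm.mul_apply, ← pow_add, Nat.div_add_mod m a, hm, hq]
            exact (h ^ (a * (m / a))).injective h3
          exact Nat.find_min hperiod (Nat.mod_lt m ha0) ⟨hpos, hmod⟩
      -- counting: a ≤ 2 * t * (K + 1)
      set M : ℕ := n * (K + 1) with hMdef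
      set Q : ℕ := (M - 1) / a + 1 with hQdef
      have hEkey : ∀ i i' : Fin n, E i ≤ E i' → (h ^ E i) x = (h ^ E i') x →
          E i' / a = E i / a → i = i' := by
        intro i i' hle heq hdiv'
        obtain ⟨q, hq⟩ := hdvd _ (perm_pow_fix_of_eq h x hle heq)
        have hEi' : E i' = E i + a * q := by
          rw [← hq]; exact (Nat.add_sub_cancel' hle).symm
        have h6 : E i' / a = E i / a + q := by
          rw [hEi', Nat.add_mul_div_left _ _ ha0]
        have hq0 : q = 0 := by rw [hdiv'] at h6; omega
        have hEE : E i = E i' := by rw [hEi', hq0, Nat.mul_zero, Nat.add_zero]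
        exact Fin.ext (by rw [← hE2 i, ← hE2 i', hEE])
      have hcount : n ≤ t * Q := by
        have hmaps : ∀ i : Fin n, i ∈ (Finset.univ : Finset (Fin n)) →
            ((h ^ E i) x, E i / a) ∈ Y ×ˢ Finset.range Q := by
          intro i _
          rw [Finset.mem_product]
          refine ⟨hE3 i, ?_⟩
          rw [Finset.mem_range, hQdef]
          have h7 : E i ≤ M - 1 := by have := hE1 i; omega
          have := Nat.div_le_div_right (c := a) h7
          omega
        have hinj : Set.InjOn (fun i : Fin n => ((h ^ E i) x, E i / a))
            ↑(Finset.univ : Finset (Fin n)) := by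
          intro i _ i' _ heq
          simp only [Prod.mk.injEq] at heq
          rcases Nat.le_total (E i) (E i') with hle | hle
          · exact hEkey i i' hle heq.1 heq.2.symm
          · exact (hEkey i' i hle heq.1.symm heq.2).symm
        have h8 := Finset.card_le_card_of_injOn _ hmaps hinj
        have h9 : n ≤ Y.card * Q := by simpa [Finset.card_product, mul_comm] using h8
        exact h9.trans (Nat.mul_le_mul_right Q hYcard)
      have haK : a ≤ 2 * t * (K + 1) := by
        have hM1 : 1 ≤ M := by
          have : 1 * 1 ≤ n * (K + 1) := Nat.mul_le_mul (by omega) (by omega)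
          omega
        have haQ : a * Q ≤ (M - 1) + a := by
          have h9 : a * ((M - 1) / a) ≤ M - 1 := Nat.mul_div_le (M - 1) a
          calc a * Q = a * ((M - 1) / a) + a := by rw [hQdef, Nat.mul_add, Nat.mul_one]
            _ ≤ (M - 1) + a := by omega
        have h2 : n * a ≤ t * (M - 1) + t * a := by
          calc n * a ≤ (t * Q) * a := Nat.mul_le_mul_right a hcount
            _ = t * (a * Q) := by ring
            _ ≤ t * ((M - 1) + a) := Nat.mul_le_mul_left t haQ
            _ = t * (M - 1) + t * a := by ring
        have h3 : 2 * (t * a) ≤ n * a := by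
          calc 2 * (t * a) = (2 * t) * a := by ring
            _ ≤ n * a := Nat.mul_le_mul_right a (by omega)
        have h4 : n * a ≤ 2 * (t * (M - 1)) := by
          have hA := h2; have hB := h3
          generalize t * (M - 1) = A at hA ⊢
          generalize t * a = B at hA hB
          generalize n * a = C at hA hB ⊢
          omega
        have h5 : n * a ≤ n * (2 * t * (K + 1)) := by
          calc n * a ≤ 2 * (t * (M - 1)) := h4
            _ ≤ 2 * (t * M) := by
                have : t * (M - 1) ≤ t * M := Nat.mul_le_mul_left t (by omega)
                omega
            _ = n * (2 * t * (K + 1)) := by rw [hMdef]; ring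
        exact Nat.le_of_mul_le_mul_left h5 (by omega)
      refine ⟨a, ha0, ?_, ?_⟩
      · have h10 : 2 * t * (K + 1) ≤ 2 * t * (s + 1) := Nat.mul_le_mul_left (2 * t) (by omega)
        omega
      have hga : (g ^ a) = (h ^ a) ^ n := by
        rw [← hpow, ← pow_mul, ← pow_mul, mul_comm]
      rw [hga, ← pow_mul]
      exact perm_pow_fix_mul h x a n ha
  refine isOfFinOrder_iff_pow_eq_one.mpr ⟨Nat.factorial N, Nat.factorial_pos N, ?_⟩
  ext x
  obtain ⟨p, hp0, hpN, hfp⟩ := key x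
  obtain ⟨q, hq⟩ := Nat.dvd_factorial hp0 hpN
  simp only [Equiv.Perm.one_apply, Equiv.Perm.coe_one, id_eq]
  rw [hq]
  exact perm_pow_fix_mul g x p q hfp
end

section
/- Suppose (X,d) is a metric space, T a simplicial tree with all vertices of valence at most ℓ, and f : X → T satisfies (1/m)d(x,y) − m ≤ d_T(f(x),f(y)) ≤ m·d(x,y) + m for all x,y ∈ X, and every ball B(x, m²+m) in X has at most q points. Then for every point p ∈ T and R ∈ ℤ⁺, the preimage f⁻¹(B(p,R)) has at most ℓ^{R+2}·q elements. -/
open SimpleGraph Set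

/-- Predecessor lemma: a vertex at distance `k+1` has a neighbor at distance `k`. -/
lemma exists_pred_of_dist {V : Type*} {G : SimpleGraph V} (hc : G.Connected)
    {p v : V} {k : ℕ} (h : G.dist p v = k + 1) :
    ∃ u : V, G.Adj u v ∧ G.dist p u = k := by
  obtain ⟨w, hw⟩ := hc.exists_walk_length_eq_dist v p
  rw [SimpleGraph.dist_comm, h] at hw
  cases w with
  | nil => simp at hw
  | cons hadj w' =>
    rename_i u
    simp only [SimpleGraph.Walk.length_cons, Nat.add_right_cancel_iff] at hw
    refine ⟨u, hadj.symm, le_antisymm ?_ ?_⟩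
    · calc G.dist p u = G.dist u p := SimpleGraph.dist_comm ..
        _ ≤ w'.length := SimpleGraph.dist_le w'
        _ = k := hw
    · have h1 : G.dist v u ≤ 1 := by
        have := SimpleGraph.dist_le (SimpleGraph.Walk.cons hadj SimpleGraph.Walk.nil)
        simpa using this
      have := hc.dist_triangle (u := p) (v := u) (w := v)
      have h2 : G.dist u v ≤ 1 := by rwa [SimpleGraph.dist_comm] at h1
      omega

/-- Spheres in a connected graph of max degree `ℓ` have at most `ℓ^k` vertices. -/
lemma sphere_bound {V : Type*} {G : SimpleGraph V} (hc : G.Connected) {ℓ : ℕ}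
    (hval : ∀ v : V, (G.neighborSet v).Finite ∧ (G.neighborSet v).ncard ≤ ℓ) (p : V) :
    ∀ k : ℕ, {v : V | G.dist p v = k}.Finite ∧ {v : V | G.dist p v = k}.ncard ≤ ℓ ^ k := by
  classical
  intro k
  induction k with
  | zero =>
    have : {v : V | G.dist p v = 0} = {p} := by
      ext v; simp [hc.dist_eq_zero_iff, eq_comm]
    rw [this]; simp
  | succ k ih =>
    obtain ⟨hfin, hcard⟩ := ih
    set s : Finset V := hfin.toFinset with hs
    let t : V → Finset V := fun u => (hval u).1.toFinset
    have hsub : {v : V | G.dist p v = k + 1} ⊆ ↑(s.biUnion t) := by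
      intro v hv
      obtain ⟨u, hadj, hu⟩ := exists_pred_of_dist hc hv
      simp only [Finset.coe_biUnion, Set.mem_iUnion]
      refine ⟨u, by simp [hs, hu], ?_⟩
      simp [t, SimpleGraph.mem_neighborSet, hadj]
    refine ⟨Set.Finite.subset (s.biUnion t).finite_toSet hsub, ?_⟩
    calc {v : V | G.dist p v = k + 1}.ncard ≤ (↑(s.biUnion t) : Set V).ncard :=
          Set.ncard_le_ncard hsub (s.biUnion t).finite_toSet
      _ = (s.biUnion t).card := Set.ncard_coe_finset _
      _ ≤ ∑ u ∈ s, (t u).card := Finset.card_biUnion_le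
      _ ≤ ∑ _u ∈ s, ℓ := by
          refine Finset.sum_le_sum fun u _ => ?_
          have := (hval u).2
          rwa [← Set.ncard_coe_finset, Set.Finite.coe_toFinset]
      _ = s.card * ℓ := by simp [mul_comm]
      _ ≤ ℓ ^ k * ℓ := by
          apply Nat.mul_le_mul_right
          rwa [← Set.ncard_coe_finset, Set.Finite.coe_toFinset]
      _ = ℓ ^ (k + 1) := by ring

/-- Balls in a connected graph of max degree `ℓ ≥ 2` have at most `ℓ^(R+1)` vertices. -/
lemma ball_bound {V : Type*} {G : SimpleGraph V} (hc : G.Connected) {ℓ : ℕ} (hℓ : 2 ≤ ℓ)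
    (hval : ∀ v : V, (G.neighborSet v).Finite ∧ (G.neighborSet v).ncard ≤ ℓ) (p : V) :
    ∀ R : ℕ, {v : V | G.dist p v ≤ R}.Finite ∧ {v : V | G.dist p v ≤ R}.ncard ≤ ℓ ^ (R + 1) := by
  intro R
  induction R with
  | zero =>
    have : {v : V | G.dist p v ≤ 0} = {p} := by
      ext v; simp [hc.dist_eq_zero_iff, eq_comm]
    rw [this]; simpa using Nat.one_le_iff_ne_zero.mpr (by positivity)
  | succ R ih =>
    obtain ⟨hfin, hcard⟩ := ih
    obtain ⟨hfinS, hcardS⟩ := sphere_bound hc hval p (R + 1)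
    have hset : {v : V | G.dist p v ≤ R + 1} =
        {v : V | G.dist p v ≤ R} ∪ {v : V | G.dist p v = R + 1} := by
      ext v; simp [Nat.le_add_one_iff]
    rw [hset]
    refine ⟨hfin.union hfinS, ?_⟩
    calc ({v : V | G.dist p v ≤ R} ∪ {v : V | G.dist p v = R + 1}).ncard
        ≤ {v : V | G.dist p v ≤ R}.ncard + {v : V | G.dist p v = R + 1}.ncard :=
          Set.ncard_union_le _ _
      _ ≤ ℓ ^ (R + 1) + ℓ ^ (R + 1) := Nat.add_le_add hcard hcardS
      _ = 2 * ℓ ^ (R + 1) := by ring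
      _ ≤ ℓ * ℓ ^ (R + 1) := Nat.mul_le_mul_right _ hℓ
      _ = ℓ ^ (R + 2) := by ring

/-- if `f : X → T` is an `(m, m)`-quasi-isometric embedding of a
metric space into a simplicial tree of valence at most `ℓ`, and balls of radius
`m² + m` in `X` have at most `q` points, then the preimage of each ball of
radius `R` in `T` has at most `ℓ^(R+2) · q` points. -/
theorem preimage_of_tree_ball_bound (X : Type*) [MetricSpace X]
    (V : Type*) (G : SimpleGraph V) (hT : G.IsTree)
    (ℓ m q : ℕ) (hℓ : 0 < ℓ) (hm : 0 < m) (hq : 0 < q)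
    (hval : ∀ v : V, (G.neighborSet v).Finite ∧ (G.neighborSet v).ncard ≤ ℓ)
    (f : X → V)
    (hqi : ∀ x y : X, (1 / (m : ℝ)) * dist x y - m ≤ (G.dist (f x) (f y) : ℝ) ∧
      (G.dist (f x) (f y) : ℝ) ≤ m * dist x y + m)
    (hball : ∀ x : X, (Metric.closedBall x ((m ^ 2 + m : ℕ) : ℝ)).Finite ∧
      (Metric.closedBall x ((m ^ 2 + m : ℕ) : ℝ)).ncard ≤ q)
    (p : V) (R : ℕ) (hR : 0 < R) :
    {x : X | G.dist p (f x) ≤ R}.Finite ∧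
      {x : X | G.dist p (f x) ≤ R}.ncard ≤ ℓ ^ (R + 2) * q := by
  classical
  have hc : G.Connected := hT.isConnected
  have hm' : (0 : ℝ) < m := by exact_mod_cast hm
  -- Points mapping to vertices at graph distance ≤ 1 are within `m² + m`.
  have hdist_le : ∀ x y : X, G.dist (f x) (f y) ≤ 1 →
      y ∈ Metric.closedBall x ((m ^ 2 + m : ℕ) : ℝ) := by
    intro x y h
    have h1 := (hqi x y).1
    have h2 : (G.dist (f x) (f y) : ℝ) ≤ 1 := by exact_mod_cast h
    have hd : dist x y ≤ (m : ℝ) ^ 2 + m := by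
      have := h1.trans h2
      have hmul : (1 / (m : ℝ)) * dist x y ≤ m + 1 := by linarith
      have : dist x y ≤ (m + 1) * m := by
        rw [div_mul_eq_mul_div, mul_comm] at hmul
        calc dist x y = (dist x y / m) * m := by field_simp
          _ ≤ (m + 1) * m := by
              apply mul_le_mul_of_nonneg_right _ hm'.le
              simpa [mul_comm] using hmul
      nlinarith
    simp only [Metric.mem_closedBall, dist_comm y x]
    push_cast
    linarith
  rcases Nat.lt_or_ge ℓ 2 with hℓ1 | hℓ2
  · -- ℓ = 1 : the tree has graph diameter ≤ 1
    have hℓe : ℓ = 1 := by omega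
    have hdiam : ∀ a b : V, G.dist a b ≤ 1 := by
      intro a b
      by_contra hab
      push_neg at hab
      obtain ⟨w, hw⟩ := hc.exists_walk_length_eq_dist a b
      have hpath : w.IsPath := w.isPath_of_length_eq_dist hw
      cases w with
      | nil => simp [← hw] at hab
      | cons h1 w1 =>
        cases w1 with
        | nil => simp [← hw] at hab
        | cons h2 w2 =>
          rename_i u c
          have hadj1 : a ∈ G.neighborSet u := h1.symm
          have hadj2 : c ∈ G.neighborSet u := h2
          have hac : a ≠ c := by
            intro hEq
            rw [SimpleGraph.Walk.cons_isPath_iff] at hpath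
            exact hpath.2 (by rw [hEq]; simp [SimpleGraph.Walk.support_cons])
          have hsub : {a, c} ⊆ G.neighborSet u := by
            intro z hz; rcases hz with rfl | rfl
            · exact hadj1
            · exact hadj2
          have h2le : 2 ≤ (G.neighborSet u).ncard := by
            calc 2 = ({a, c} : Set V).ncard := (Set.ncard_pair hac).symm
              _ ≤ (G.neighborSet u).ncard := Set.ncard_le_ncard hsub (hval u).1
          have := (hval u).2
          omega
    rcases Set.eq_empty_or_nonempty {x : X | G.dist p (f x) ≤ R} with he | ⟨x0, _⟩
    · rw [he]; simp
    · have hsub : {x : X | G.dist p (f x) ≤ R} ⊆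
          Metric.closedBall x0 ((m ^ 2 + m : ℕ) : ℝ) := by
        intro x _
        exact hdist_le x0 x (hdiam _ _)
      refine ⟨(hball x0).1.subset hsub, ?_⟩
      calc {x : X | G.dist p (f x) ≤ R}.ncard
          ≤ (Metric.closedBall x0 ((m ^ 2 + m : ℕ) : ℝ)).ncard :=
            Set.ncard_le_ncard hsub (hball x0).1
        _ ≤ q := (hball x0).2
        _ ≤ ℓ ^ (R + 2) * q := by simp [hℓe]
  · -- ℓ ≥ 2 : count vertices in the ball, fibers have ≤ q points each
    have hfiber : ∀ v : V, {x : X | f x = v}.Finite ∧ {x : X | f x = v}.ncard ≤ q := by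
      intro v
      rcases Set.eq_empty_or_nonempty {x : X | f x = v} with he | ⟨x0, hx0⟩
      · rw [he]; simp [hq.le]
      · have hsub : {x : X | f x = v} ⊆ Metric.closedBall x0 ((m ^ 2 + m : ℕ) : ℝ) := by
          intro x hx
          apply hdist_le x0 x
          have : f x0 = f x := by rw [hx0, hx]
          simp [this, SimpleGraph.dist_self]
        exact ⟨(hball x0).1.subset hsub,
          le_trans (Set.ncard_le_ncard hsub (hball x0).1) (hball x0).2⟩
    obtain ⟨hBfin, hBcard⟩ := ball_bound hc hℓ2 hval p R
    set s : Finset V := hBfin.toFinset with hs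
    let t : V → Finset X := fun v => (hfiber v).1.toFinset
    have hsub : {x : X | G.dist p (f x) ≤ R} ⊆ ↑(s.biUnion t) := by
      intro x hx
      simp only [Finset.coe_biUnion, Set.mem_iUnion]
      exact ⟨f x, by simpa [hs] using hx, by simp [t]⟩
    refine ⟨Set.Finite.subset (s.biUnion t).finite_toSet hsub, ?_⟩
    calc {x : X | G.dist p (f x) ≤ R}.ncard
        ≤ (↑(s.biUnion t) : Set X).ncard :=
          Set.ncard_le_ncard hsub (s.biUnion t).finite_toSet
      _ = (s.biUnion t).card := Set.ncard_coe_finset _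
      _ ≤ ∑ v ∈ s, (t v).card := Finset.card_biUnion_le
      _ ≤ ∑ _v ∈ s, q := by
          refine Finset.sum_le_sum fun v _ => ?_
          have := (hfiber v).2
          rwa [← Set.ncard_coe_finset, Set.Finite.coe_toFinset]
      _ = s.card * q := by simp [mul_comm]
      _ ≤ ℓ ^ (R + 1) * q := by
          apply Nat.mul_le_mul_right
          rwa [← Set.ncard_coe_finset, Set.Finite.coe_toFinset]
      _ ≤ ℓ ^ (R + 2) * q := by
          apply Nat.mul_le_mul_right
          exact Nat.pow_le_pow_right hℓ (by omega)
end

section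
/- Every infinitely divisible element of Bd(ℤ) (bounded displacement permutations of ℤ) is torsion. -/
/-!
Let `g = hⁿ` with `|g x - x| ≤ r`, `|h x - x| ≤ s` and `n > 2r`, which infinite divisibility
allows. Follow the `h`-orbit `p i = hⁱ x` of a point. For each `j < n` the subsequence
`p j, p (j + n), p (j + 2n), …` moves in steps of size at most `r` and starts within `ns` of `p 0`.
If the first `n (2ns + 2)` orbit points were distinct, each of these `n` subsequences would have
to leave the interval `[p 0 - ns, p 0 + ns]`, and on leaving it first lands in one of the two
flanking intervals of length `r`. The `n` landing points are distinct orbit points, so `n ≤ 2r`,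
a contradiction. Hence every `h`-orbit has fewer than `n (2ns + 2)` points, so `h`, and with it
`g`, has finite order.
-/

open Finset

noncomputable def collar (a b : ℤ) (r : ℕ) : Finset ℤ :=
  Icc (a - r) (a - 1) ∪ Icc (b + 1) (b + r)

lemma card_collar_le (a b : ℤ) (r : ℕ) : #(collar a b r) ≤ 2 * r := by
  refine (card_union_le _ _).trans ?_
  simp only [Int.card_Icc]
  omega

lemma abs_sub_le_of_dist_le {x y : ℤ} {r : ℕ} (h : dist x y ≤ r) : |y - x| ≤ r := by
  rw [Int.dist_eq, abs_sub_comm] at h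
  exact_mod_cast h

lemma abs_add_sub_le_mul_of_abs_succ_sub_le (p : ℕ → ℤ) (s : ℤ)
    (hs : ∀ i, |p (i + 1) - p i| ≤ s) (i j : ℕ) : |p (i + j) - p i| ≤ j * s := by
  induction j with
  | zero => simp
  | succ j ih =>
    calc |p (i + (j + 1)) - p i|
        ≤ |p (i + j + 1) - p (i + j)| + |p (i + j) - p i| := abs_sub_le _ _ _
      _ ≤ s + j * s := add_le_add (hs _) ih
      _ = (j + 1 : ℕ) * s := by push_cast; ring

lemma exists_le_mem_collar_of_notMem_Icc (q : ℕ → ℤ) (a b : ℤ) (r : ℕ)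
    (hstep : ∀ k, |q (k + 1) - q k| ≤ r) (h0 : q 0 ∈ Icc a b) :
    ∀ k, q k ∉ Icc a b → ∃ k' ≤ k, q k' ∈ collar a b r := by
  intro k
  induction k with
  | zero => exact fun h => absurd h0 h
  | succ k ih =>
    intro hk
    by_cases hprev : q k ∈ Icc a b
    · refine ⟨k + 1, le_rfl, ?_⟩
      have := abs_le.mp (hstep k)
      simp only [collar, mem_union, mem_Icc] at hprev hk ⊢
      omega
    · obtain ⟨k', hk', hmem⟩ := ih hprev
      exact ⟨k', hk'.trans k.le_succ, hmem⟩

lemma exists_lt_notMem_Icc_of_injOn (q : ℕ → ℤ) (a b : ℤ) (N : ℕ)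
    (hq : Set.InjOn q (range N)) (hN : #(Icc a b) < N) : ∃ k < N, q k ∉ Icc a b := by
  by_contra! h
  have := card_le_card_of_injOn q (fun k hk => h k (mem_range.mp hk)) hq
  rw [card_range] at this
  omega

lemma exists_mem_collar_of_injOn (p : ℕ → ℤ) (n r s M j : ℕ) (hj : j < n)
    (hs : ∀ i, |p (i + 1) - p i| ≤ s) (hr : ∀ i, |p (i + n) - p i| ≤ r)
    (hinj : Set.InjOn p (range M)) (hM : n * (2 * n * s + 2) ≤ M) :
    ∃ i < M, i % n = j ∧ p i ∈ collar (p 0 - n * s) (p 0 + n * s) r := by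
  set a := p 0 - n * s
  set b := p 0 + n * s
  have hwidth : #(Icc a b) < 2 * n * s + 2 := by
    rw [Int.card_Icc, show b + 1 - a = ((2 * n * s + 1 : ℕ) : ℤ) by push_cast; ring,
      Int.toNat_natCast]
    omega
  have hidx : ∀ k < 2 * n * s + 2, j + k * n < M := fun k hk =>
    calc j + k * n < n + k * n := by omega
      _ ≤ n + (2 * n * s + 1) * n := by gcongr; omega
      _ = n * (2 * n * s + 2) := by ring
      _ ≤ M := hM
  have hstart : p j ∈ Icc a b := by
    have hjs := abs_le.mp (abs_add_sub_le_mul_of_abs_succ_sub_le p s hs 0 j)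
    rw [zero_add] at hjs
    have : (j : ℤ) * s ≤ n * s := by gcongr
    simp only [mem_Icc, a, b]
    constructor <;> linarith
  have hwalk : ∀ k, |p (j + (k + 1) * n) - p (j + k * n)| ≤ r := fun k => by
    rw [show j + (k + 1) * n = j + k * n + n by ring]
    exact hr _
  have hwalk_inj : Set.InjOn (fun k => p (j + k * n)) (range (2 * n * s + 2)) :=
    fun k hk k' hk' heq =>
      Nat.eq_of_mul_eq_mul_right (by omega) (Nat.add_left_cancel
        (hinj (mem_range.mpr (hidx k (mem_range.mp hk)))
          (mem_range.mpr (hidx k' (mem_range.mp hk'))) heq))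
  obtain ⟨k, hk, hout⟩ := exists_lt_notMem_Icc_of_injOn _ a b _ hwalk_inj hwidth
  obtain ⟨k', hk', hcollar⟩ := exists_le_mem_collar_of_notMem_Icc (fun k => p (j + k * n)) a b r
    hwalk (by simpa using hstart) k hout
  exact ⟨j + k' * n, hidx k' (by omega), by simp [Nat.mod_eq_of_lt hj], hcollar⟩

lemma lt_of_injOn_range_of_abs_sub_le (p : ℕ → ℤ) (n r s M : ℕ) (hrn : 2 * r < n)
    (hs : ∀ i, |p (i + 1) - p i| ≤ s) (hr : ∀ i, |p (i + n) - p i| ≤ r)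
    (hinj : Set.InjOn p (range M)) : M < n * (2 * n * s + 2) := by
  by_contra! hM
  set landing := (range M).filter (fun i => p i ∈ collar (p 0 - n * s) (p 0 + n * s) r)
  have hsurj : Set.SurjOn (· % n) landing (range n) := fun j hj => by
    obtain ⟨i, hi, hij, hcollar⟩ :=
      exists_mem_collar_of_injOn p n r s M j (mem_range.mp hj) hs hr hinj hM
    exact ⟨i, mem_filter.mpr ⟨mem_range.mpr hi, hcollar⟩, hij⟩
  have hlanding : #landing ≤ #(collar (p 0 - n * s) (p 0 + n * s) r) :=
    card_le_card_of_injOn p (fun i hi => (mem_filter.mp hi).2)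
      (hinj.mono (coe_subset.mpr (filter_subset _ _)))
  have hn : n ≤ #landing := card_range n ▸ card_le_card_of_surjOn _ hsurj
  have := card_collar_le (p 0 - n * s) (p 0 + n * s) r
  omega

namespace Equiv.Perm

variable {α : Type*}

lemma exists_pow_apply_eq_self_of_not_injOn (f : Perm α) (x : α) (N : ℕ)
    (h : ¬ Set.InjOn (fun i => (f ^ i) x) (range N)) : ∃ d, 0 < d ∧ d ≤ N ∧ (f ^ d) x = x := by
  suffices key : ∀ i j, i < j → j < N → (f ^ i) x = (f ^ j) x →
      ∃ d, 0 < d ∧ d ≤ N ∧ (f ^ d) x = x by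
    simp only [Set.InjOn, coe_range, Set.mem_Iio, not_forall] at h
    obtain ⟨i, hi, j, hj, heq, hne⟩ := h
    rcases lt_or_gt_of_ne hne with hlt | hlt
    · exact key i j hlt hj heq
    · exact key j i hlt hi heq.symm
  intro i j hij hj heq
  refine ⟨j - i, by omega, by omega, (f ^ i).injective ?_⟩
  rw [← mul_apply, ← pow_add, Nat.add_sub_cancel' hij.le, heq]

lemma isOfFinOrder_of_forall_exists_pow_apply_eq_self (f : Perm α) (N : ℕ)
    (h : ∀ x, ∃ d, 0 < d ∧ d ≤ N ∧ (f ^ d) x = x) : IsOfFinOrder f := by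
  refine isOfFinOrder_iff_pow_eq_one.mpr ⟨N.factorial, N.factorial_pos, Equiv.ext fun x => ?_⟩
  obtain ⟨d, hd, hdN, hx⟩ := h x
  obtain ⟨t, ht⟩ := Nat.dvd_factorial hd hdN
  rw [ht, pow_mul]
  exact pow_apply_eq_self_of_apply_eq_self hx t

end Equiv.Perm

lemma isOfFinOrder_of_abs_pow_apply_sub_le (h : Equiv.Perm ℤ) (n r s : ℕ) (hrn : 2 * r < n)
    (hs : ∀ x, |h x - x| ≤ s) (hr : ∀ x, |(h ^ n) x - x| ≤ r) : IsOfFinOrder h := by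
  refine h.isOfFinOrder_of_forall_exists_pow_apply_eq_self (n * (2 * n * s + 2)) fun x => ?_
  refine h.exists_pow_apply_eq_self_of_not_injOn x _ fun hinj =>
    (lt_of_injOn_range_of_abs_sub_le _ n r s _ hrn (fun i => ?_) (fun i => ?_) hinj).false
  · rw [pow_succ', Equiv.Perm.mul_apply]
    exact hs _
  · rw [add_comm, pow_add, Equiv.Perm.mul_apply]
    exact hr _

/-- every infinitely divisible element of `Bd(ℤ)` is torsion,
where divisibility is within `Bd(ℤ)`. -/
theorem bdZ_infinitely_divisible_torsion (g : Equiv.Perm ℤ)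
    (hg : ∃ r : ℕ, ∀ x : ℤ, dist x (g x) ≤ (r : ℝ))
    (hdiv : {n : ℕ | 0 < n ∧ ∃ h : Equiv.Perm ℤ,
      (∃ r : ℕ, ∀ x : ℤ, dist x (h x) ≤ (r : ℝ)) ∧ h ^ n = g}.Infinite) :
    IsOfFinOrder g := by
  obtain ⟨r, hr⟩ := hg
  obtain ⟨n, ⟨-, h, ⟨s, hs⟩, rfl⟩, hrn⟩ := hdiv.exists_gt (2 * r)
  exact (isOfFinOrder_of_abs_pow_apply_sub_le h n r s hrn
    (fun x => abs_sub_le_of_dist_le (hs x)) (fun x => abs_sub_le_of_dist_le (hr x))).pow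
end

section
/- The group Bd(ℤ) of bounded displacement permutations of ℤ has no subgroup isomorphic to the additive group ℚ of rational numbers; consequently neither does Bd(ℤ⁺). -/
lemma bd_fixed_pow {X : Type*} (e : Equiv.Perm X) {x : X} (hx : e x = x) (m : ℕ) :
    (e ^ m) x = x := by
  induction m with
  | zero => simp
  | succ n ih => rw [pow_succ, Equiv.Perm.mul_apply, hx, ih]

/-- Key lemma: if `h` is an infinite-order permutation of a "ℤ-like" metric space
with displacement ≤ s, then `h ^ (2r+2)` cannot have displacement ≤ r. -/
lemma bd_key {X : Type*} [MetricSpace X] (c : X → ℤ)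
    (hc : ∀ x y : X, dist x y = |((c x : ℝ)) - ((c y : ℝ))|)
    (h : Equiv.Perm X) (r s : ℕ)
    (hs : ∀ x, dist x (h x) ≤ (s : ℝ))
    (hr : ∀ x, dist x ((h ^ (2 * r + 2)) x) ≤ (r : ℝ))
    (hinf : ∀ n : ℕ, 0 < n → h ^ n ≠ 1) : False := by
  set k := 2 * r + 2 with hk
  set T := 2 * k * s + k with hT
  have hkpos : 0 < k := by omega
  obtain ⟨x₀, hx₀⟩ : ∃ x, (h ^ (Nat.factorial T)) x ≠ x := by
    by_contra hcon
    push_neg at hcon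
    exact hinf _ (Nat.factorial_pos T) (Equiv.ext fun x => (hcon x).trans rfl)
  set z : ℕ → X := fun i => (h ^ i) x₀ with hz
  have hdist_ne : ∀ i j : ℕ, i < j → j ≤ T → z i ≠ z j := by
    intro i j hij hjT heq
    have h1 : (h ^ (j - i)) x₀ = x₀ := by
      have h2 : (h ^ i) ((h ^ (j - i)) x₀) = (h ^ i) x₀ := by
        rw [← Equiv.Perm.mul_apply, ← pow_add, Nat.add_sub_cancel' (le_of_lt hij)]
        exact heq.symm
      exact Equiv.injective _ h2
    obtain ⟨m, hm⟩ := Nat.dvd_factorial (Nat.sub_pos_of_lt hij)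
      (le_trans (Nat.sub_le _ _) hjT)
    exact hx₀ (by rw [hm, pow_mul]; exact bd_fixed_pow _ h1 m)
  set f : ℕ → ℤ := fun i => c (z i) with hf
  have hzeq : ∀ i j : ℕ, f i = f j → z i = z j := by
    intro i j hfe
    have : dist (z i) (z j) = 0 := by
      rw [hc]
      simp only [hf] at hfe
      rw [hfe, sub_self, abs_zero]
    exact dist_eq_zero.mp this
  have hinj : ∀ i j : ℕ, i ≤ T → j ≤ T → f i = f j → i = j := by
    intro i j hi hj hfe
    by_contra hne
    rcases Nat.lt_or_ge i j with hlt | hge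
    · exact hdist_ne i j hlt hj (hzeq i j hfe)
    · have : j < i := lt_of_le_of_ne hge (Ne.symm hne)
      exact hdist_ne j i this hi (hzeq j i hfe.symm)
  set S : Finset ℤ := (Finset.range (T + 1)).image f with hS
  have hcard : S.card = T + 1 := by
    rw [hS, Finset.card_image_of_injOn, Finset.card_range]
    intro i hi j hj hfe
    exact hinj i j (Nat.lt_succ_iff.mp (Finset.mem_range.mp hi))
      (Nat.lt_succ_iff.mp (Finset.mem_range.mp hj)) hfe
  have hSne : S.Nonempty := by
    refine ⟨f 0, Finset.mem_image.mpr ⟨0, Finset.mem_range.mpr (Nat.succ_pos T), rfl⟩⟩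
  set M := S.max' hSne with hM
  set mn := S.min' hSne with hmn
  have hsub : S ⊆ Finset.Icc mn M := fun a ha =>
    Finset.mem_Icc.mpr ⟨S.min'_le a ha, S.le_max' a ha⟩
  have hMm : (T : ℤ) ≤ M - mn := by
    have h1 : S.card ≤ (Finset.Icc mn M).card := Finset.card_le_card hsub
    rw [hcard, Int.card_Icc] at h1
    omega
  obtain ⟨p, hp, hfp⟩ := Finset.mem_image.mp (S.max'_mem hSne)
  obtain ⟨q, hq, hfq⟩ := Finset.mem_image.mp (S.min'_mem hSne)
  have hpT : p ≤ T := Nat.lt_succ_iff.mp (Finset.mem_range.mp hp)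
  have hqT : q ≤ T := Nat.lt_succ_iff.mp (Finset.mem_range.mp hq)
  -- the big-spread pair
  have hbig : ∀ i j : ℕ, f i = mn → f j = M → (T : ℝ) ≤ dist (z i) (z j) := by
    intro i j hfi hfj
    rw [hc]
    have h1 : ((T : ℤ) : ℝ) ≤ ((M - mn : ℤ) : ℝ) := by exact_mod_cast hMm
    have h2 : ((M - mn : ℤ) : ℝ) ≤ |((c (z i) : ℝ)) - ((c (z j) : ℝ))| := by
      have : (c (z i) : ℤ) = mn := hfi
      have h3 : (c (z j) : ℤ) = M := hfj
      rw [this, h3, abs_sub_comm]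
      push_cast
      exact le_abs_self _
    calc (T : ℝ) = ((T : ℤ) : ℝ) := by push_cast; ring
      _ ≤ ((M - mn : ℤ) : ℝ) := h1
      _ ≤ _ := h2
  -- step bounds
  have step_k : ∀ u : ℕ, dist (z u) (z (u + k)) ≤ (r : ℝ) := by
    intro u
    have hzu : z (u + k) = (h ^ k) (z u) := by
      simp only [hz, ← Equiv.Perm.mul_apply, ← pow_add]
      rw [Nat.add_comm u k]
    rw [hzu]
    exact hr (z u)
  have step_1 : ∀ u : ℕ, dist (z u) (z (u + 1)) ≤ (s : ℝ) := by
    intro u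
    have hzu : z (u + 1) = h (z u) := by
      simp only [hz, pow_succ', Equiv.Perm.mul_apply]
    rw [hzu]
    exact hs (z u)
  have chain_k : ∀ u a : ℕ, dist (z u) (z (u + a * k)) ≤ (a : ℝ) * r := by
    intro u a
    induction a with
    | zero => simp
    | succ n ih =>
      have hidx : u + (n + 1) * k = (u + n * k) + k := by ring
      calc dist (z u) (z (u + (n + 1) * k))
          ≤ dist (z u) (z (u + n * k)) + dist (z (u + n * k)) (z (u + (n + 1) * k)) :=
            dist_triangle _ _ _
        _ ≤ (n : ℝ) * r + r := by
            refine add_le_add ih ?_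
            rw [hidx]; exact step_k _
        _ = ((n + 1 : ℕ) : ℝ) * r := by push_cast; ring
  have chain_1 : ∀ u b : ℕ, dist (z u) (z (u + b)) ≤ (b : ℝ) * s := by
    intro u b
    induction b with
    | zero => simp
    | succ n ih =>
      calc dist (z u) (z (u + (n + 1)))
          ≤ dist (z u) (z (u + n)) + dist (z (u + n)) (z (u + n + 1)) := dist_triangle _ _ _
        _ ≤ (n : ℝ) * s + s := add_le_add ih (step_1 _)
        _ = ((n + 1 : ℕ) : ℝ) * s := by push_cast; ring
  have main : ∀ i j a b : ℕ, j = (i + a * k) + b → dist (z i) (z j) ≤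
      (a : ℝ) * r + (b : ℝ) * s := by
    intro i j a b hj
    calc dist (z i) (z j) ≤ dist (z i) (z (i + a * k)) + dist (z (i + a * k)) (z j) :=
          dist_triangle _ _ _
      _ ≤ (a : ℝ) * r + (b : ℝ) * s := by
          refine add_le_add (chain_k _ _) ?_
          rw [hj]
          exact chain_1 _ _
  -- combine: get the numeric contradiction
  have hfinal : ∃ i j : ℕ, i ≤ j ∧ j ≤ T ∧ (T : ℝ) ≤ dist (z i) (z j) := by
    rcases le_total q p with hqp | hpq
    · exact ⟨q, p, hqp, hpT, hbig q p hfq hfp⟩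
    · refine ⟨p, q, hpq, hqT, ?_⟩
      rw [dist_comm]
      exact hbig q p hfq hfp
  obtain ⟨i, j, hij, hjT, hTle⟩ := hfinal
  obtain ⟨a, b, hbk, hab⟩ : ∃ a b : ℕ, b < k ∧ j - i = a * k + b :=
    ⟨(j - i) / k, (j - i) % k, Nat.mod_lt _ hkpos,
      by rw [mul_comm]; exact (Nat.div_add_mod _ _).symm⟩
  have hj : j = (i + a * k) + b := by omega
  have hTle2 : (T : ℝ) ≤ (a : ℝ) * r + (b : ℝ) * s := le_trans hTle (main i j a b hj)
  have hTn : T ≤ a * r + b * s := by exact_mod_cast hTle2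
  have hak : a * k ≤ T := by omega
  have hTk : T = (2 * s + 1) * k := by rw [hT]; ring
  have haa : a ≤ 2 * s + 1 := by
    refine Nat.le_of_mul_le_mul_right ?_ hkpos
    rw [← hTk]
    exact hak
  have h1 : a * r ≤ (2 * s + 1) * r := Nat.mul_le_mul_right r haa
  have h2 : b * s ≤ (2 * r + 1) * s := Nat.mul_le_mul_right s (by omega)
  have h4 : (2 * s + 1) * r + (2 * r + 1) * s = 4 * (r * s) + r + s := by ring
  have h5 : T = 4 * (r * s) + 4 * s + 2 * r + 2 := by rw [hT, hk]; ring
  omega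

/-- ℚ does not embed into Bd of a "ℤ-like" metric space. -/
lemma bd_no_Q {X : Type*} [MetricSpace X] (c : X → ℤ)
    (hc : ∀ x y : X, dist x y = |((c x : ℝ)) - ((c y : ℝ))|) :
    ¬ ∃ φ : Multiplicative ℚ →* Bd X, Function.Injective φ := by
  rintro ⟨φ, hφ⟩
  obtain ⟨r, hr⟩ := (φ (Multiplicative.ofAdd (1 : ℚ))).2
  set k := 2 * r + 2 with hk
  have hk0 : (k : ℚ) ≠ 0 := by positivity
  set u : Multiplicative ℚ := Multiplicative.ofAdd ((k : ℚ)⁻¹) with hu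
  have hpow : (φ u) ^ k = φ (Multiplicative.ofAdd (1 : ℚ)) := by
    rw [← map_pow]
    congr 1
    rw [hu]
    have : (Multiplicative.ofAdd ((k : ℚ)⁻¹)) ^ k = Multiplicative.ofAdd (k • ((k : ℚ)⁻¹)) := rfl
    rw [this]
    congr 1
    rw [nsmul_eq_mul, mul_inv_cancel₀ hk0]
  have hcoe_pow : ((φ u : Equiv.Perm X)) ^ k = ((φ (Multiplicative.ofAdd (1 : ℚ)) : Bd X) : Equiv.Perm X) := by
    rw [← hpow]
    exact (SubmonoidClass.coe_pow _ _).symm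
  obtain ⟨s, hs⟩ := (φ u).2
  refine bd_key c hc (φ u : Equiv.Perm X) r s hs ?_ ?_
  · intro x
    rw [← hk, hcoe_pow]
    exact hr x
  · intro n hn hone
    have h1 : (φ u) ^ n = 1 := by
      apply Subtype.ext
      show ((φ u ^ n : Bd X) : Equiv.Perm X) = ((1 : Bd X) : Equiv.Perm X)
      rw [SubmonoidClass.coe_pow, OneMemClass.coe_one]
      exact hone
    rw [← map_pow] at h1
    have h2 : u ^ n = 1 := by
      apply hφ
      rw [h1, map_one]
    have h3 : (n : ℚ) * (k : ℚ)⁻¹ = 0 := by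
      have : u ^ n = Multiplicative.ofAdd (n • ((k : ℚ)⁻¹)) := rfl
      rw [this] at h2
      have h4 : (n • ((k : ℚ)⁻¹) : ℚ) = 0 := by
        have := congrArg Multiplicative.toAdd h2
        simpa using this
      rwa [nsmul_eq_mul] at h4
    have h5 : (n : ℚ) = 0 := by
      rcases mul_eq_zero.mp h3 with h | h
      · exact h
      · exact absurd h (inv_ne_zero hk0)
    have : n = 0 := by exact_mod_cast h5
    omega

/-- `Bd(ℤ)` has no subgroup isomorphic to the additive group `ℚ`,
and consequently neither does `Bd(ℤ⁺)` (positive integers modelled by `ℕ`). -/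
theorem bd_no_Q_subgroup :
    (¬ ∃ φ : Multiplicative ℚ →* Bd ℤ, Function.Injective φ) ∧
      ¬ ∃ φ : Multiplicative ℚ →* Bd ℕ, Function.Injective φ := by
  constructor
  · exact bd_no_Q (fun x => x) (fun x y => by rw [Int.dist_eq])
  · exact bd_no_Q (fun n => (n : ℤ)) (fun x y => by rw [Nat.dist_eq]; push_cast; ring_nf)
end

section
/- If G is a subgroup of Sym(ℤ⁺) isomorphic to the additive group ℚ of rationals, then there exists g ∈ G such that the set {x − g(x) : x ∈ ℤ⁺} is infinite. -/
/-!
If every element of `G` had bounded displacement `x ↦ x - g x`, let `g = e 1` move points by at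
most `k`, put `n = 2k + 1`, and let `h = e (1/n)`, so that `h ^ n = g`, move points by at most `c`.
As `ℚ` is torsion-free, `h` has arbitrarily long orbits, and along one the displacements
`a m = x - h^m x` are pairwise distinct, satisfy `|a m| ≤ m c`, and change by at most `k` every
`n` steps. Each of the `n` chains `a j, a (j + n), a (j + 2n), …` (`j < n`) starts in `[-nc, nc]`
and must leave it; the `n` distinct values at which they first do lie in a band of only `2k`
integers.
-/

theorem exists_abs_le_of_finite {α : Type*} {f : α → ℤ} (hf : {d | ∃ x, d = f x}.Finite) :
    ∃ C : ℕ, ∀ x, |f x| ≤ C := by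
  obtain ⟨C, hC⟩ := (hf.image Int.natAbs).bddAbove
  exact ⟨C, fun x => by rw [Int.abs_eq_natAbs]; exact_mod_cast hC ⟨f x, ⟨x, rfl⟩, rfl⟩⟩

namespace Equiv.Perm

variable {α : Type*}

theorem exists_pow_apply_ne_self_of_not_isOfFinOrder {σ : Perm α} (hσ : ¬IsOfFinOrder σ)
    (L : ℕ) : ∃ x, ∀ d, 0 < d → d < L → (σ ^ d) x ≠ x := by
  by_contra! hper
  refine hσ (isOfFinOrder_iff_pow_eq_one.mpr ⟨L.factorial, L.factorial_pos, ext fun x => ?_⟩)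
  obtain ⟨d, hd, hdL, hx⟩ := hper x
  obtain ⟨m, hm⟩ := Nat.dvd_factorial hd hdL.le
  rw [hm, pow_mul, pow_apply_eq_self_of_apply_eq_self hx, one_apply]

theorem injOn_pow_apply {σ : Perm α} {x : α} {L : ℕ}
    (hx : ∀ d, 0 < d → d < L → (σ ^ d) x ≠ x) :
    Set.InjOn (fun m : ℕ => (σ ^ m) x) (Set.Iio L) := by
  suffices ∀ m m', m < m' → m' < L → (σ ^ m) x ≠ (σ ^ m') x by
    intro m hm m' hm' heq
    by_contra hne
    rcases Nat.lt_or_gt_of_ne hne with hlt | hlt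
    · exact this m m' hlt hm' heq
    · exact this m' m hlt hm heq.symm
  intro m m' hlt hm' heq
  refine hx (m' - m) (by omega) (by omega) ((σ ^ m).injective ?_)
  rw [← mul_apply, ← pow_add, Nat.add_sub_cancel' hlt.le, heq]

theorem abs_sub_pow_apply_le {σ : Perm ℕ} {C : ℤ} (hσ : ∀ x : ℕ, |(x : ℤ) - σ x| ≤ C) (m : ℕ)
    (x : ℕ) : |(x : ℤ) - (σ ^ m) x| ≤ m * C := by
  induction m with
  | zero => simp
  | succ m ih =>
    rw [pow_succ', mul_apply]
    calc |(x : ℤ) - σ ((σ ^ m) x)|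
        ≤ |(x : ℤ) - (σ ^ m) x| + |((σ ^ m) x : ℤ) - σ ((σ ^ m) x)| := abs_sub_le _ _ _
      _ ≤ m * C + C := add_le_add ih (hσ _)
      _ = (m + 1 : ℕ) * C := by push_cast; ring

end Equiv.Perm

namespace Int

theorem card_Icc_sdiff_Icc (W k : ℕ) :
    (Finset.Icc (-(W + k : ℤ)) (W + k) \ Finset.Icc (-(W : ℤ)) W).card = 2 * k := by
  rw [Finset.card_sdiff_of_subset (Finset.Icc_subset_Icc (by omega) (by omega)), Int.card_Icc,
    Int.card_Icc]
  omega

theorem exists_lt_abs_of_injOn {c : ℕ → ℤ} {W : ℕ} (hc : Set.InjOn c (Set.Iio (2 * W + 2))) :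
    ∃ M < 2 * W + 2, (W : ℤ) < |c M| := by
  by_contra! hbdd
  have := Finset.card_le_card_of_injOn c (s := Finset.range (2 * W + 2))
    (t := Finset.Icc (-(W : ℤ)) W) (fun M hM => Finset.mem_Icc.mpr
      (abs_le.mp (hbdd M (Finset.mem_range.mp hM))))
    (fun M hM M' hM' => hc (by simpa using hM) (by simpa using hM'))
  simp only [Finset.card_range, Int.card_Icc] at this
  omega

theorem exists_le_abs_le_of_abs_sub_le {c : ℕ → ℤ} {W k : ℕ} (h0 : |c 0| ≤ W)
    (hstep : ∀ M, |c (M + 1) - c M| ≤ k) {M₀ : ℕ} (hM₀ : (W : ℤ) < |c M₀|) :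
    ∃ M ≤ M₀, (W : ℤ) < |c M| ∧ |c M| ≤ W + k := by
  induction M₀ with
  | zero => exact absurd h0 hM₀.not_ge
  | succ m ih =>
    by_cases hm : (W : ℤ) < |c m|
    · obtain ⟨M, hM, hband⟩ := ih hm
      exact ⟨M, by omega, hband⟩
    · refine ⟨m + 1, le_rfl, hM₀, ?_⟩
      linarith [abs_sub_abs_le_abs_sub (c (m + 1)) (c m), hstep m, not_lt.mp hm]

theorem le_two_mul_of_injOn_of_abs_sub_le {a : ℕ → ℤ} {n k W : ℕ} (hW : ∀ j < n, |a j| ≤ W)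
    (hstep : ∀ P, |a (P + n) - a P| ≤ k) (hinj : Set.InjOn a (Set.Iio (n * (2 * W + 2)))) :
    n ≤ 2 * k := by
  have hidx : ∀ j < n, ∀ M < 2 * W + 2, j + M * n < n * (2 * W + 2) := fun j hj M hM => by
    nlinarith
  have hexit : ∀ j : Fin n, ∃ M < 2 * W + 2,
      a (j + M * n) ∈ Finset.Icc (-(W + k : ℤ)) (W + k) \ Finset.Icc (-(W : ℤ)) W := by
    intro j
    obtain ⟨M₀, hM₀, hout⟩ := exists_lt_abs_of_injOn (c := fun M => a (j + M * n)) (W := W)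
      fun M hM M' hM' h => Nat.eq_of_mul_eq_mul_right j.pos
        (by have := hinj (hidx j j.2 M hM) (hidx j j.2 M' hM') h; omega)
    obtain ⟨M, hM, hlo, hhi⟩ := exists_le_abs_le_of_abs_sub_le (c := fun M => a (j + M * n))
      (by simpa using hW j j.2) (fun M => by simpa [add_mul, add_assoc] using hstep (j + M * n))
      hout
    refine ⟨M, by omega, ?_⟩
    rw [Finset.mem_sdiff, Finset.mem_Icc, Finset.mem_Icc, ← abs_le, ← abs_le]
    exact ⟨hhi, hlo.not_ge⟩
  choose M hM hband using hexit
  have := Finset.card_le_card_of_injOn (fun j : Fin n => a (j + M j * n))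
    (s := Finset.univ) (fun j _ => hband j) fun j _ j' _ h => by
      have heq := congrArg (· % n) (hinj (hidx j j.2 _ (hM j)) (hidx j' j'.2 _ (hM j')) h)
      simpa [Nat.mod_eq_of_lt, Fin.ext_iff] using heq
  rwa [Finset.card_univ, Fintype.card_fin, card_Icc_sdiff_Icc] at this

end Int

/-- answer to Suchkov's question: if `G ≤ Sym(ℤ⁺)` (positive
integers modelled by `ℕ`) is isomorphic to the additive group `ℚ`, then some
`g ∈ G` has `{x - g x : x}` infinite (difference taken in `ℤ`). -/
theorem suchkov (G : Subgroup (Equiv.Perm ℕ)) (e : Multiplicative ℚ ≃* G) :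
    ∃ g ∈ G, {d : ℤ | ∃ x : ℕ, d = (x : ℤ) - (g x : ℤ)}.Infinite := by
  by_contra! hfin
  let φ : Multiplicative ℚ →* Equiv.Perm ℕ := G.subtype.comp e.toMonoidHom
  have hbdd (q) : ∃ C : ℕ, ∀ x : ℕ, |(x : ℤ) - φ q x| ≤ C :=
    exists_abs_le_of_finite (hfin _ (e q).2)
  obtain ⟨k, hk⟩ := hbdd (.ofAdd 1)
  set n := 2 * k + 1
  obtain ⟨c, hc⟩ := hbdd (.ofAdd (n : ℚ)⁻¹)
  set h := φ (.ofAdd (n : ℚ)⁻¹)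
  have hpow : h ^ n = φ (.ofAdd 1) := by
    rw [← map_pow, ← ofAdd_nsmul, nsmul_eq_mul, mul_inv_cancel₀ (by positivity)]
  have hh : ¬IsOfFinOrder h :=
    (Subtype.val_injective.comp e.injective).isOfFinOrder_iff.not.mpr
      (not_isOfFinOrder_of_isMulTorsionFree (by simp))
  obtain ⟨x, hx⟩ :=
    Equiv.Perm.exists_pow_apply_ne_self_of_not_isOfFinOrder hh (n * (2 * (n * c) + 2))
  have := Int.le_two_mul_of_injOn_of_abs_sub_le (a := fun m => (x : ℤ) - (h ^ m) x)
    (n := n) (k := k) (W := n * c) (fun j hj => ?_) (fun P => ?_) ?_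
  · omega
  · calc |(x : ℤ) - (h ^ j) x| ≤ j * c := Equiv.Perm.abs_sub_pow_apply_le hc j x
      _ ≤ n * c := by gcongr
  · simpa [add_comm P n, pow_add, hpow] using hk ((h ^ P) x)
  · intro m hm m' hm' heq
    exact Equiv.Perm.injOn_pow_apply hx hm hm' (by simpa using heq)
end
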